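/- arXiv:2509.20038 — 4 statements merged into one kernel-verified Lean document; each statement's English description precedes it below -/
import Mathlib

section
/- Let G be a [5,3]-graph of order at least 9 with minimum degree at least 3. Then G contains (as a not-necessarily-induced subgraph) either a C~3 or a C~4, where C~ℓ denotes a cycle of length ℓ together with an additional vertex adjacent to two consecutive vertices of the cycle. -/
def edgesWithin {V : Type*} [DecidableEq V] (G : SimpleGraph V) [DecidableRel G.Adj]
    (A : Finset V) : ℕ := (A.sym2.filter (· ∈ G.edgeSet)).card

/-- `G` is an `[s,t]`-graph: every induced subgraph on `s` vertices has at least `t` edges. -/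
def IsSTGraph {V : Type*} [DecidableEq V] (G : SimpleGraph V) [DecidableRel G.Adj]
    (s t : ℕ) : Prop := ∀ A : Finset V, A.card = s → t ≤ edgesWithin G A
/-- `tildeC ℓ`: a cycle of length `ℓ` with an extra vertex adjacent to two consecutive
cycle vertices. -/
def tildeC (ℓ : ℕ) : SimpleGraph (Fin ℓ ⊕ Unit) :=
  SimpleGraph.fromRel (fun a b =>
    match a, b with
    | Sum.inl i, Sum.inl j => (SimpleGraph.cycleGraph ℓ).Adj i j
    | Sum.inl i, Sum.inr _ => (i : ℕ) = 0 ∨ (i : ℕ) = 1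
    | _, _ => False)

/-- `H` is contained in `G` as a not-necessarily-induced subgraph. -/
def ContainsCopy {α V : Type*} (H : SimpleGraph α) (G : SimpleGraph V) : Prop :=
  ∃ f : H →g G, Function.Injective f

set_option linter.unusedSectionVars false
set_option linter.unreachableTactic false
set_option linter.unusedTactic false
set_option linter.unnecessarySeqFocus false

section Aux
variable {V : Type*} [DecidableEq V] (G : SimpleGraph V) [DecidableRel G.Adj]

/-- edge indicator -/
def eind (u v : V) : ℕ := if G.Adj u v then 1 else 0

lemma eind1 {u v : V} (h : G.Adj u v) : eind G u v = 1 := if_pos h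
lemma eind0 {u v : V} (h : ¬ G.Adj u v) : eind G u v = 0 := if_neg h
lemma eind_le_one (u v : V) : eind G u v ≤ 1 := by unfold eind; split_ifs <;> omega
lemma adj_of_eind {u v : V} (h : 1 ≤ eind G u v) : G.Adj u v := by
  by_contra hc; rw [eind0 G hc] at h; omega

lemma card_filter_insert (p : V → Prop) [DecidablePred p] (b : V) (s : Finset V) (hb : b ∉ s) :
    ((insert b s).filter p).card = (if p b then 1 else 0) + (s.filter p).card := by
  rw [Finset.filter_insert]
  split_ifs
  · rw [Finset.card_insert_of_notMem (fun h => hb (Finset.mem_of_mem_filter _ h))]; omega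
  · simp

lemma card_filter_singleton (p : V → Prop) [DecidablePred p] (v : V) :
    (({v} : Finset V).filter p).card = if p v then 1 else 0 := by
  rw [Finset.filter_singleton]; split_ifs <;> simp

lemma edgesWithin_singleton (v : V) : edgesWithin G {v} = 0 := by
  simp [edgesWithin, Finset.sym2_singleton, Finset.filter_singleton, Sym2.diag]

lemma edgesWithin_insert (a : V) (s : Finset V) (ha : a ∉ s) :
    edgesWithin G (insert a s) = (s.filter (G.Adj a)).card + edgesWithin G s := by
  classical
  unfold edgesWithin
  rw [Finset.sym2_insert, Finset.filter_union]
  rw [Finset.card_union_of_disjoint]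
  · congr 1
    rw [Finset.filter_image]
    have h1 : ((insert a s).filter fun b => s(a,b) ∈ G.edgeSet) = s.filter (G.Adj a) := by
      simp [Finset.filter_insert]
    rw [h1, Finset.card_image_of_injOn]
    intro b hb c hc h
    rw [Sym2.eq_iff] at h
    rcases h with ⟨-, h⟩ | ⟨h1, h2⟩
    · exact h
    · subst h2
      simp only [Finset.coe_filter, Set.mem_setOf_eq] at hb
      exact absurd hb.2 (G.irrefl)
  · rw [Finset.disjoint_left]
    rintro e he he'
    rw [Finset.mem_filter] at he he'
    obtain ⟨b, hb, rfl⟩ := Finset.mem_image.mp he.1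
    rw [Finset.mem_sym2_iff] at he'
    exact ha (he'.1 a (by simp))

lemma card5 (v1 v2 v3 v4 v5 : V) (h12 : v1 ≠ v2) (h13 : v1 ≠ v3) (h14 : v1 ≠ v4)
    (h15 : v1 ≠ v5) (h23 : v2 ≠ v3) (h24 : v2 ≠ v4) (h25 : v2 ≠ v5) (h34 : v3 ≠ v4)
    (h35 : v3 ≠ v5) (h45 : v4 ≠ v5) : ({v1,v2,v3,v4,v5} : Finset V).card = 5 := by
  rw [Finset.card_insert_of_notMem (by simp [h12,h13,h14,h15]),
      Finset.card_insert_of_notMem (by simp [h23,h24,h25]),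
      Finset.card_insert_of_notMem (by simp [h34,h35]),
      Finset.card_insert_of_notMem (by simp [h45]), Finset.card_singleton]

lemma edgesWithin_five (v1 v2 v3 v4 v5 : V) (h12 : v1 ≠ v2) (h13 : v1 ≠ v3) (h14 : v1 ≠ v4)
    (h15 : v1 ≠ v5) (h23 : v2 ≠ v3) (h24 : v2 ≠ v4) (h25 : v2 ≠ v5) (h34 : v3 ≠ v4)
    (h35 : v3 ≠ v5) (h45 : v4 ≠ v5) :
    edgesWithin G {v1,v2,v3,v4,v5} =
      eind G v1 v2 + eind G v1 v3 + eind G v1 v4 + eind G v1 v5 + eind G v2 v3 +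
      eind G v2 v4 + eind G v2 v5 + eind G v3 v4 + eind G v3 v5 + eind G v4 v5 := by
  rw [edgesWithin_insert G v1 _ (by simp [h12,h13,h14,h15]),
      edgesWithin_insert G v2 _ (by simp [h23,h24,h25]),
      edgesWithin_insert G v3 _ (by simp [h34,h35]),
      edgesWithin_insert G v4 _ (by simp [h45]),
      edgesWithin_singleton,
      card_filter_insert _ _ _ (by simp [h23,h24,h25]),
      card_filter_insert _ _ _ (by simp [h34,h35]),
      card_filter_insert _ _ _ (by simp [h45]),
      card_filter_insert _ _ _ (by simp [h34,h35]),
      card_filter_insert _ _ _ (by simp [h45]),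
      card_filter_insert _ _ _ (by simp [h45]),
      card_filter_singleton, card_filter_singleton, card_filter_singleton,
      card_filter_singleton]
  unfold eind
  omega

lemma common3 (a b c u w : V) (h1 : 2 ≤ eind G a u + eind G b u + eind G c u)
    (h2 : 2 ≤ eind G a w + eind G b w + eind G c w) :
    ∃ y, (y = a ∨ y = b ∨ y = c) ∧ G.Adj y u ∧ G.Adj y w := by
  by_cases hau : G.Adj a u <;> by_cases hbu : G.Adj b u <;> by_cases hcu : G.Adj c u <;>
  by_cases haw : G.Adj a w <;> by_cases hbw : G.Adj b w <;> by_cases hcw : G.Adj c w <;>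
  rw [eind] at h1 h2 <;>
  simp only [eind, hau, hbu, hcu, haw, hbw, hcw, if_true, if_false, ite_true, ite_false,
    if_pos, if_neg, not_false_iff] at h1 h2 <;>
  first
    | omega
    | exact ⟨a, Or.inl rfl, hau, haw⟩
    | exact ⟨b, Or.inr (Or.inl rfl), hbu, hbw⟩
    | exact ⟨c, Or.inr (Or.inr rfl), hcu, hcw⟩

end Aux
section Step1
variable {V : Type*} [Fintype V] [DecidableEq V] (G : SimpleGraph V) [DecidableRel G.Adj]

lemma step1 (hst : IsSTGraph G 5 3) (hn : 9 ≤ Fintype.card V) (hδ : ∀ v : V, 3 ≤ G.degree v) :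
    ∃ p q r : V, G.Adj p q ∧ G.Adj q r ∧ G.Adj p r := by
  by_contra hcon
  push_neg at hcon
  have NT : ∀ p q r : V, G.Adj p q → G.Adj q r → G.Adj p r → False := fun p q r h1 h2 h3 =>
    hcon p q r h1 h2 h3
  obtain ⟨v⟩ : Nonempty V := Fintype.card_pos_iff.mp (by omega)
  have hdeg := hδ v
  rw [← SimpleGraph.card_neighborFinset_eq_degree] at hdeg
  obtain ⟨t, hts, ht3⟩ := Finset.exists_subset_card_eq hdeg
  obtain ⟨a, b, c, hab, hac, hbc, rfl⟩ := Finset.card_eq_three.mp ht3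
  have hva : G.Adj v a := (SimpleGraph.mem_neighborFinset _ _ _).mp (hts (by simp))
  have hvb : G.Adj v b := (SimpleGraph.mem_neighborFinset _ _ _).mp (hts (by simp))
  have hvc : G.Adj v c := (SimpleGraph.mem_neighborFinset _ _ _).mp (hts (by simp))
  have nab : ¬ G.Adj a b := fun h => NT v a b hva h hvb
  have nac : ¬ G.Adj a c := fun h => NT v a c hva h hvc
  have nbc : ¬ G.Adj b c := fun h => NT v b c hvb h hvc
  set W : Finset V := Finset.univ \ {v,a,b,c} with hWdef
  have memW : ∀ u ∈ W, u ≠ v ∧ u ≠ a ∧ u ≠ b ∧ u ≠ c := by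
    intro u hu
    rw [hWdef, Finset.mem_sdiff] at hu
    simp only [Finset.mem_insert, Finset.mem_singleton, not_or] at hu
    exact hu.2
  have hWcard : 5 ≤ W.card := by
    have h4 : ({v,a,b,c} : Finset V).card ≤ 4 := by
      have h1 := Finset.card_insert_le v ({a,b,c} : Finset V)
      have h2 := Finset.card_insert_le a ({b,c} : Finset V)
      have h3 := Finset.card_insert_le b ({c} : Finset V)
      simp only [Finset.card_singleton] at *
      omega
    have h5 := Finset.card_sdiff_of_subset (Finset.subset_univ ({v,a,b,c} : Finset V))
    have h6 : ({v,a,b,c} : Finset V).card ≤ Finset.univ.card :=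
      Finset.card_le_card (Finset.subset_univ _)
    rw [Finset.card_univ] at h5 h6
    rw [hWdef, h5]
    omega
  have pair : ∀ u w, u ∈ W → w ∈ W → u ≠ w →
      3 ≤ eind G a u + eind G b u + eind G c u + eind G a w + eind G b w + eind G c w +
        eind G u w := by
    intro u w hu hw huw
    obtain ⟨huv, hua, hub, huc⟩ := memW u hu
    obtain ⟨hwv, hwa, hwb, hwc⟩ := memW w hw
    have h5 := hst {a,b,c,u,w} (card5 a b c u w hab hac (Ne.symm hua) (Ne.symm hwa) hbc
      (Ne.symm hub) (Ne.symm hwb) (Ne.symm huc) (Ne.symm hwc) huw)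
    rw [edgesWithin_five G a b c u w hab hac (Ne.symm hua) (Ne.symm hwa) hbc
      (Ne.symm hub) (Ne.symm hwb) (Ne.symm huc) (Ne.symm hwc) huw] at h5
    rw [eind0 G nab, eind0 G nac, eind0 G nbc] at h5
    omega
  classical
  set L : Finset V := W.filter (fun u => eind G a u + eind G b u + eind G c u ≤ 1) with hLdef
  set H : Finset V := W.filter (fun u => ¬ (eind G a u + eind G b u + eind G c u ≤ 1)) with hHdef
  have memH : ∀ u ∈ H, u ∈ W ∧ 2 ≤ eind G a u + eind G b u + eind G c u := by
    intro u hu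
    rw [hHdef, Finset.mem_filter] at hu
    exact ⟨hu.1, by omega⟩
  have memL : ∀ u ∈ L, u ∈ W ∧ eind G a u + eind G b u + eind G c u ≤ 1 := by
    intro u hu
    rw [hLdef, Finset.mem_filter] at hu
    exact hu
  have hLH := Finset.card_filter_add_card_filter_not
    (s := W) (p := fun u => eind G a u + eind G b u + eind G c u ≤ 1)
  rw [← hLdef, ← hHdef] at hLH
  have hL2 : L.card ≤ 2 := by
    by_contra hL
    obtain ⟨t, htL, ht3⟩ := Finset.exists_subset_card_eq (s := L) (n := 3) (by omega)
    obtain ⟨y1, y2, y3, h12, h13, h23, rfl⟩ := Finset.card_eq_three.mp ht3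
    have Ladj : ∀ p q, p ∈ L → q ∈ L → p ≠ q → G.Adj p q := by
      intro p q hp hq hpq
      obtain ⟨hpW, hpe⟩ := memL p hp
      obtain ⟨hqW, hqe⟩ := memL q hq
      have := pair p q hpW hqW hpq
      exact adj_of_eind G (by omega)
    exact NT y1 y2 y3 (Ladj y1 y2 (htL (by simp)) (htL (by simp)) h12)
      (Ladj y2 y3 (htL (by simp)) (htL (by simp)) h23)
      (Ladj y1 y3 (htL (by simp)) (htL (by simp)) h13)
  have hH3 : 3 ≤ H.card := by omega
  obtain ⟨t, htH, ht3⟩ := Finset.exists_subset_card_eq hH3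
  obtain ⟨u1, u2, u3, h12, h13, h23, rfl⟩ := Finset.card_eq_three.mp ht3
  have hu1 := memH u1 (htH (by simp))
  have hu2 := memH u2 (htH (by simp))
  have hu3 := memH u3 (htH (by simp))
  have Hind : ∀ p q, p ∈ W → q ∈ W → 2 ≤ eind G a p + eind G b p + eind G c p →
      2 ≤ eind G a q + eind G b q + eind G c q → ¬ G.Adj p q := by
    intro p q _ _ hpe hqe hadj
    obtain ⟨y, _, hyp, hyq⟩ := common3 G a b c p q hpe hqe
    exact NT y p q hyp hadj hyq
  have vind : ∀ u, u ∈ W → 2 ≤ eind G a u + eind G b u + eind G c u → ¬ G.Adj v u := by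
    intro u _ hue hadj
    obtain ⟨y, hymem, hyu, -⟩ := common3 G a b c u u hue hue
    have hvy : G.Adj v y := by rcases hymem with rfl | rfl | rfl <;> assumption
    exact NT v y u hvy hyu hadj
  -- the two leftover vertices
  have husub : ({u1, u2, u3} : Finset V) ⊆ W := fun z hz => by
    rcases Finset.mem_insert.mp hz with rfl | hz'
    · exact hu1.1
    · rcases Finset.mem_insert.mp hz' with rfl | hz''
      · exact hu2.1
      · rw [Finset.mem_singleton] at hz''; subst hz''; exact hu3.1
  have hZcard : 2 ≤ (W \ {u1, u2, u3}).card := by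
    have := Finset.card_sdiff_of_subset husub
    have h3' : ({u1, u2, u3} : Finset V).card ≤ 3 := by
      have g1 := Finset.card_insert_le u1 ({u2,u3} : Finset V)
      have g2 := Finset.card_insert_le u2 ({u3} : Finset V)
      simp only [Finset.card_singleton] at *
      omega
    omega
  obtain ⟨z1, hz1, z2, hz2, hz12⟩ := Finset.one_lt_card.mp (by omega : 1 < (W \ {u1,u2,u3}).card)
  have memZ : ∀ z ∈ W \ ({u1, u2, u3} : Finset V), z ∈ W ∧ z ≠ u1 ∧ z ≠ u2 ∧ z ≠ u3 := by
    intro z hz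
    rw [Finset.mem_sdiff] at hz
    simp only [Finset.mem_insert, Finset.mem_singleton, not_or] at hz
    exact ⟨hz.1, hz.2⟩
  have key2 : ∀ z ∈ W \ ({u1, u2, u3} : Finset V),
      2 ≤ eind G u1 z + eind G u2 z + eind G u3 z := by
    intro z hz
    obtain ⟨hzW, hz1', hz2', hz3'⟩ := memZ z hz
    obtain ⟨hzv, -, -, -⟩ := memW z hzW
    obtain ⟨hu1v, -, -, -⟩ := memW u1 hu1.1
    obtain ⟨hu2v, -, -, -⟩ := memW u2 hu2.1
    obtain ⟨hu3v, -, -, -⟩ := memW u3 hu3.1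
    have h5 := hst {v, u1, u2, u3, z} (card5 v u1 u2 u3 z (Ne.symm hu1v) (Ne.symm hu2v)
      (Ne.symm hu3v) (Ne.symm hzv) h12 h13 (Ne.symm hz1') h23 (Ne.symm hz2') (Ne.symm hz3'))
    rw [edgesWithin_five G v u1 u2 u3 z (Ne.symm hu1v) (Ne.symm hu2v)
      (Ne.symm hu3v) (Ne.symm hzv) h12 h13 (Ne.symm hz1') h23 (Ne.symm hz2') (Ne.symm hz3')] at h5
    rw [eind0 G (vind u1 hu1.1 hu1.2), eind0 G (vind u2 hu2.1 hu2.2),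
        eind0 G (vind u3 hu3.1 hu3.2),
        eind0 G (Hind u1 u2 hu1.1 hu2.1 hu1.2 hu2.2),
        eind0 G (Hind u1 u3 hu1.1 hu3.1 hu1.2 hu3.2),
        eind0 G (Hind u2 u3 hu2.1 hu3.1 hu2.2 hu3.2)] at h5
    have := eind_le_one G v z
    omega
  have zLow : ∀ z ∈ W \ ({u1, u2, u3} : Finset V),
      eind G a z + eind G b z + eind G c z ≤ 1 := by
    intro z hz
    by_contra hhigh
    have hze : 2 ≤ eind G a z + eind G b z + eind G c z := by omega
    have hadjsome : ∃ i, (i = u1 ∨ i = u2 ∨ i = u3) ∧ G.Adj i z := by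
      have hk := key2 z hz
      by_cases g1 : G.Adj u1 z
      · exact ⟨u1, Or.inl rfl, g1⟩
      by_cases g2 : G.Adj u2 z
      · exact ⟨u2, Or.inr (Or.inl rfl), g2⟩
      by_cases g3 : G.Adj u3 z
      · exact ⟨u3, Or.inr (Or.inr rfl), g3⟩
      rw [eind0 G g1, eind0 G g2, eind0 G g3] at hk
      omega
    obtain ⟨i, himem, hiz⟩ := hadjsome
    have hie : 2 ≤ eind G a i + eind G b i + eind G c i := by
      rcases himem with rfl | rfl | rfl
      exacts [hu1.2, hu2.2, hu3.2]
    obtain ⟨y, -, hyi, hyz⟩ := common3 G a b c i z hie hze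
    exact NT y i z hyi hiz hyz
  -- final contradiction
  obtain ⟨hz1W, -, -, -⟩ := memZ z1 hz1
  obtain ⟨hz2W, -, -, -⟩ := memZ z2 hz2
  have hadj12 : G.Adj z1 z2 := by
    have hp := pair z1 z2 hz1W hz2W hz12
    have l1 := zLow z1 hz1
    have l2 := zLow z2 hz2
    exact adj_of_eind G (by omega)
  obtain ⟨y, -, hy1, hy2⟩ := common3 G u1 u2 u3 z1 z2 (key2 z1 hz1) (key2 z2 hz2)
  exact NT y z1 z2 hy1 hadj12 hy2

end Step1
section Copies
variable {V : Type*} [DecidableEq V] (G : SimpleGraph V)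

lemma copy3 (a b c y : V) (hab : a ≠ b) (hac : a ≠ c) (hay : a ≠ y) (hbc : b ≠ c)
    (hby : b ≠ y) (hcy : c ≠ y) (e1 : G.Adj a b) (e2 : G.Adj b c) (e3 : G.Adj a c)
    (e4 : G.Adj y a) (e5 : G.Adj y b) : ContainsCopy (tildeC 3) G := by
  have hinj : Function.Injective (Sum.elim ![a, b, c] (fun _ : Unit => y)) := by
    intro u v h
    rcases u with i | u <;> rcases v with j | v
    · fin_cases i <;> fin_cases j <;> simp_all
    · fin_cases i <;> simp_all
    · fin_cases j <;> simp_all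
    · simp
  refine ⟨⟨Sum.elim ![a, b, c] (fun _ : Unit => y), ?_⟩, hinj⟩
  intro u v h
  rcases u with i | u <;> rcases v with j | v
  · fin_cases i <;> fin_cases j <;>
      simp_all [tildeC, SimpleGraph.cycleGraph_adj] <;>
      first
        | exact e1 | exact e1.symm | exact e2 | exact e2.symm | exact e3 | exact e3.symm
        | (exfalso; revert h; decide)
  · fin_cases i <;>
      simp_all [tildeC] <;>
      first
        | exact e4.symm | exact e5.symm | (exfalso; revert h; decide)
  · fin_cases j <;>
      simp_all [tildeC] <;>
      first
        | exact e4 | exact e5 | (exfalso; revert h; decide)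
  · simp_all [tildeC]

lemma copy4 (v1 v2 v3 v4 y : V)
    (d12 : v1 ≠ v2) (d13 : v1 ≠ v3) (d14 : v1 ≠ v4) (d1y : v1 ≠ y)
    (d23 : v2 ≠ v3) (d24 : v2 ≠ v4) (d2y : v2 ≠ y) (d34 : v3 ≠ v4) (d3y : v3 ≠ y)
    (d4y : v4 ≠ y)
    (e1 : G.Adj v1 v2) (e2 : G.Adj v2 v3) (e3 : G.Adj v3 v4) (e4 : G.Adj v4 v1)
    (e5 : G.Adj y v1) (e6 : G.Adj y v2) : ContainsCopy (tildeC 4) G := by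
  have hinj : Function.Injective (Sum.elim ![v1, v2, v3, v4] (fun _ : Unit => y)) := by
    intro u v h
    rcases u with i | u <;> rcases v with j | v
    · fin_cases i <;> fin_cases j <;> simp_all
    · fin_cases i <;> simp_all
    · fin_cases j <;> simp_all
    · simp
  refine ⟨⟨Sum.elim ![v1, v2, v3, v4] (fun _ : Unit => y), ?_⟩, hinj⟩
  intro u v h
  rcases u with i | u <;> rcases v with j | v
  · fin_cases i <;> fin_cases j <;>
      simp_all [tildeC, SimpleGraph.cycleGraph_adj] <;>
      first
        | exact e1 | exact e1.symm | exact e2 | exact e2.symm | exact e3 | exact e3.symm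
        | exact e4 | exact e4.symm
        | (exfalso; revert h; decide)
  · fin_cases i <;>
      simp_all [tildeC] <;>
      first
        | exact e5.symm | exact e6.symm | (exfalso; revert h; decide)
  · fin_cases j <;>
      simp_all [tildeC] <;>
      first
        | exact e5 | exact e6 | (exfalso; revert h; decide)
  · simp_all [tildeC]
end Copies

/-- A [5,3]-graph of order at least 9 with minimum degree at least 3 contains a `C~3`
or a `C~4` as a (not necessarily induced) subgraph. -/
theorem stmt2 {V : Type*} [Fintype V] [DecidableEq V] (G : SimpleGraph V) [DecidableRel G.Adj]
    (hst : IsSTGraph G 5 3) (hn : 9 ≤ Fintype.card V) (hδ : ∀ v : V, 3 ≤ G.degree v) :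
    ContainsCopy (tildeC 3) G ∨ ContainsCopy (tildeC 4) G := by
  by_contra hcon
  push_neg at hcon
  obtain ⟨hc3, hc4⟩ := hcon
  have ND : ∀ p q r s : V, G.Adj p q → G.Adj q r → G.Adj p r → G.Adj s p → G.Adj s q →
      p ≠ s → q ≠ s → r ≠ s → False := by
    intro p q r s e1 e2 e3 e4 e5 d1 d2 d3
    exact hc3 (copy3 G p q r s e1.ne e3.ne d1 e2.ne d2 d3 e1 e2 e3 e4 e5)
  have NH : ∀ w1 w2 w3 w4 y : V, G.Adj w1 w2 → G.Adj w2 w3 → G.Adj w3 w4 → G.Adj w4 w1 →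
      G.Adj y w1 → G.Adj y w2 → w1 ≠ w3 → w2 ≠ w4 → w3 ≠ y → w4 ≠ y → False := by
    intro w1 w2 w3 w4 y e1 e2 e3 e4 e5 e6 d13 d24 d3y d4y
    exact hc4 (copy4 G w1 w2 w3 w4 y e1.ne d13 (e4.ne).symm (e5.ne).symm e2.ne d24
      (e6.ne).symm e3.ne d3y d4y e1 e2 e3 e4 e5 e6)
  obtain ⟨x, a, b, hxa, hab, hxb⟩ := step1 G hst hn hδ
  have dxa : x ≠ a := hxa.ne
  have dab : a ≠ b := hab.ne
  have dxb : x ≠ b := hxb.ne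
  have nXA : ∀ u, u ≠ b → G.Adj x u → G.Adj a u → False := by
    intro u hub h1 h2
    exact ND x a b u hxa hab hxb h1.symm h2.symm h1.ne h2.ne (Ne.symm hub)
  have nXB : ∀ u, u ≠ a → G.Adj x u → G.Adj b u → False := by
    intro u hua h1 h2
    exact ND x b a u hxb hab.symm hxa h1.symm h2.symm h1.ne h2.ne (Ne.symm hua)
  have nAB : ∀ u, u ≠ x → G.Adj a u → G.Adj b u → False := by
    intro u hux h1 h2
    exact ND a b x u hab hxb.symm hxa.symm h1.symm h2.symm h1.ne h2.ne (Ne.symm hux)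
  -- pick the three private neighbours
  have hdega := hδ a
  rw [← SimpleGraph.card_neighborFinset_eq_degree] at hdega
  have hnsuba : ¬ G.neighborFinset a ⊆ {x, b} := by
    intro hs
    have h1 := Finset.card_le_card hs
    have h2 := Finset.card_insert_le x ({b} : Finset V)
    simp only [Finset.card_singleton] at h2
    omega
  obtain ⟨a', ha'mem, ha'nm⟩ := Finset.not_subset.mp hnsuba
  have haa' : G.Adj a a' := (SimpleGraph.mem_neighborFinset _ _ _).mp ha'mem
  obtain ⟨da'x, da'b⟩ : a' ≠ x ∧ a' ≠ b := by
    simp only [Finset.mem_insert, Finset.mem_singleton, not_or] at ha'nm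
    exact ha'nm
  have da'a : a' ≠ a := haa'.ne'
  have hdegx := hδ x
  rw [← SimpleGraph.card_neighborFinset_eq_degree] at hdegx
  have hnsubx : ¬ G.neighborFinset x ⊆ {a, b} := by
    intro hs
    have h1 := Finset.card_le_card hs
    have h2 := Finset.card_insert_le a ({b} : Finset V)
    simp only [Finset.card_singleton] at h2
    omega
  obtain ⟨x', hx'mem, hx'nm⟩ := Finset.not_subset.mp hnsubx
  have hxx' : G.Adj x x' := (SimpleGraph.mem_neighborFinset _ _ _).mp hx'mem
  obtain ⟨dx'a, dx'b⟩ : x' ≠ a ∧ x' ≠ b := by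
    simp only [Finset.mem_insert, Finset.mem_singleton, not_or] at hx'nm
    exact hx'nm
  have dx'x : x' ≠ x := hxx'.ne'
  have hdegb := hδ b
  rw [← SimpleGraph.card_neighborFinset_eq_degree] at hdegb
  have hnsubb : ¬ G.neighborFinset b ⊆ {x, a} := by
    intro hs
    have h1 := Finset.card_le_card hs
    have h2 := Finset.card_insert_le x ({a} : Finset V)
    simp only [Finset.card_singleton] at h2
    omega
  obtain ⟨b', hb'mem, hb'nm⟩ := Finset.not_subset.mp hnsubb
  have hbb' : G.Adj b b' := (SimpleGraph.mem_neighborFinset _ _ _).mp hb'mem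
  obtain ⟨db'x, db'a⟩ : b' ≠ x ∧ b' ≠ a := by
    simp only [Finset.mem_insert, Finset.mem_singleton, not_or] at hb'nm
    exact hb'nm
  have db'b : b' ≠ b := hbb'.ne'
  -- basic nonadjacency facts
  have nax' : ¬ G.Adj a x' := fun h => nXA x' dx'b hxx' h
  have nbx' : ¬ G.Adj b x' := fun h => nXB x' dx'a hxx' h
  have nxa' : ¬ G.Adj x a' := fun h => nXA a' da'b h haa'
  have nba' : ¬ G.Adj b a' := fun h => nAB a' da'x haa' h
  have nxb' : ¬ G.Adj x b' := fun h => nXB b' db'a h hbb'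
  have nab' : ¬ G.Adj a b' := fun h => nAB b' db'x h hbb'
  have dx'a' : x' ≠ a' := fun h => nxa' (h ▸ hxx')
  have dx'b' : x' ≠ b' := fun h => nxb' (h ▸ hxx')
  have da'b' : a' ≠ b' := fun h => nab' (h ▸ haa')
  -- no edge between the private neighbourhoods of different triangle vertices
  have crossXA : ∀ u w, u ≠ x → u ≠ a → u ≠ b → w ≠ x → w ≠ a → w ≠ b →
      G.Adj x u → G.Adj a w → ¬ G.Adj u w := by
    intro u w hux hua hub hwx hwa hwb h1 h2 h3
    exact NH x a w u b hxa h2 h3.symm h1.symm hxb.symm hab.symm (Ne.symm hwx) (Ne.symm hua) hwb hub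
  have crossXB : ∀ u w, u ≠ x → u ≠ a → u ≠ b → w ≠ x → w ≠ a → w ≠ b →
      G.Adj x u → G.Adj b w → ¬ G.Adj u w := by
    intro u w hux hua hub hwx hwa hwb h1 h2 h3
    exact NH x b w u a hxb h2 h3.symm h1.symm hxa.symm hab (Ne.symm hwx) (Ne.symm hub) hwa hua
  have crossAB : ∀ u w, u ≠ x → u ≠ a → u ≠ b → w ≠ x → w ≠ a → w ≠ b →
      G.Adj a u → G.Adj b w → ¬ G.Adj u w := by
    intro u w hux hua hub hwx hwa hwb h1 h2 h3
    exact NH a b w u x hab h2 h3.symm h1.symm hxa hxb (Ne.symm hwa) (Ne.symm hub) hwx hux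
  have nx'a' : ¬ G.Adj x' a' := crossXA x' a' dx'x dx'a dx'b da'x da'a da'b hxx' haa'
  have nx'b' : ¬ G.Adj x' b' := crossXB x' b' dx'x dx'a dx'b db'x db'a db'b hxx' hbb'
  have na'b' : ¬ G.Adj a' b' := crossAB a' b' da'x da'a da'b db'x db'a db'b haa' hbb'
  -- the triangle vertices have degree exactly 3
  have Na : ∀ u, G.Adj a u → u = x ∨ u = b ∨ u = a' := by
    intro u hau
    by_contra hne
    push_neg at hne
    obtain ⟨hux, hub, hua'⟩ := hne
    have hua : u ≠ a := hau.ne'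
    have hux' : u ≠ x' := fun h => nax' (h ▸ hau)
    have hub' : u ≠ b' := fun h => nab' (h ▸ hau)
    have nxu : ¬ G.Adj x u := fun h => nXA u hub h hau
    have nx'u : ¬ G.Adj x' u := fun h => crossXA x' u dx'x dx'a dx'b hux hua hub hxx' hau h
    have nb'u : ¬ G.Adj b' u := fun h => crossAB u b' hux hua hub db'x db'a db'b hau hbb' h.symm
    have h53 := hst {x, x', a', b', u} (card5 x x' a' b' u (Ne.symm dx'x) (Ne.symm da'x)
      (Ne.symm db'x) (Ne.symm hux) dx'a' dx'b' (Ne.symm hux') da'b' (Ne.symm hua') (Ne.symm hub'))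
    rw [edgesWithin_five G x x' a' b' u (Ne.symm dx'x) (Ne.symm da'x)
      (Ne.symm db'x) (Ne.symm hux) dx'a' dx'b' (Ne.symm hux') da'b' (Ne.symm hua')
      (Ne.symm hub')] at h53
    rw [eind1 G hxx', eind0 G nxa', eind0 G nxb', eind0 G nxu, eind0 G nx'a', eind0 G nx'b',
        eind0 G nx'u, eind0 G na'b', eind0 G nb'u] at h53
    have := eind_le_one G a' u
    omega
  have Nx : ∀ u, G.Adj x u → u = a ∨ u = b ∨ u = x' := by
    intro u hxu
    by_contra hne
    push_neg at hne
    obtain ⟨hua, hub, hux'⟩ := hne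
    have hux : u ≠ x := hxu.ne'
    have hua' : u ≠ a' := fun h => nxa' (h ▸ hxu)
    have hub' : u ≠ b' := fun h => nxb' (h ▸ hxu)
    have nau : ¬ G.Adj a u := fun h => nXA u hub hxu h
    have na'u : ¬ G.Adj a' u := fun h => crossXA u a' hux hua hub da'x da'a da'b hxu haa' h.symm
    have nb'u : ¬ G.Adj b' u := fun h => crossXB u b' hux hua hub db'x db'a db'b hxu hbb' h.symm
    have h53 := hst {a, x', a', b', u} (card5 a x' a' b' u (Ne.symm dx'a) (Ne.symm da'a)
      (Ne.symm db'a) (Ne.symm hua) dx'a' dx'b' (Ne.symm hux') da'b' (Ne.symm hua') (Ne.symm hub'))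
    rw [edgesWithin_five G a x' a' b' u (Ne.symm dx'a) (Ne.symm da'a)
      (Ne.symm db'a) (Ne.symm hua) dx'a' dx'b' (Ne.symm hux') da'b' (Ne.symm hua')
      (Ne.symm hub')] at h53
    rw [eind0 G nax', eind1 G haa', eind0 G nab', eind0 G nau, eind0 G nx'a', eind0 G nx'b',
        eind0 G na'b', eind0 G na'u, eind0 G nb'u] at h53
    have := eind_le_one G x' u
    omega
  have Nb : ∀ u, G.Adj b u → u = x ∨ u = a ∨ u = b' := by
    intro u hbu
    by_contra hne
    push_neg at hne
    obtain ⟨hux, hua, hub'⟩ := hne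
    have hub : u ≠ b := hbu.ne'
    have hux' : u ≠ x' := fun h => nbx' (h ▸ hbu)
    have hua' : u ≠ a' := fun h => nba' (h ▸ hbu)
    have nxu : ¬ G.Adj x u := fun h => nXB u hua h hbu
    have nx'u : ¬ G.Adj x' u := fun h => crossXB x' u dx'x dx'a dx'b hux hua hub hxx' hbu h
    have na'u : ¬ G.Adj a' u := fun h => crossAB a' u da'x da'a da'b hux hua hub haa' hbu h
    have h53 := hst {x, x', a', b', u} (card5 x x' a' b' u (Ne.symm dx'x) (Ne.symm da'x)
      (Ne.symm db'x) (Ne.symm hux) dx'a' dx'b' (Ne.symm hux') da'b' (Ne.symm hua') (Ne.symm hub'))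
    rw [edgesWithin_five G x x' a' b' u (Ne.symm dx'x) (Ne.symm da'x)
      (Ne.symm db'x) (Ne.symm hux) dx'a' dx'b' (Ne.symm hux') da'b' (Ne.symm hua')
      (Ne.symm hub')] at h53
    rw [eind1 G hxx', eind0 G nxa', eind0 G nxb', eind0 G nxu, eind0 G nx'a', eind0 G nx'b',
        eind0 G nx'u, eind0 G na'b', eind0 G na'u] at h53
    have := eind_le_one G b' u
    omega
  -- the remaining vertices
  classical
  set S6 : Finset V := {x, a, b, x', a', b'} with hS6
  set R : Finset V := Finset.univ \ S6 with hRdef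
  have memR : ∀ r ∈ R, r ≠ x ∧ r ≠ a ∧ r ≠ b ∧ r ≠ x' ∧ r ≠ a' ∧ r ≠ b' := by
    intro r hr
    rw [hRdef, Finset.mem_sdiff] at hr
    simp only [hS6, Finset.mem_insert, Finset.mem_singleton, not_or] at hr
    exact hr.2
  have hRcard : 3 ≤ R.card := by
    have h6 : S6.card ≤ 6 := by
      rw [hS6]
      have g1 := Finset.card_insert_le x ({a, b, x', a', b'} : Finset V)
      have g2 := Finset.card_insert_le a ({b, x', a', b'} : Finset V)
      have g3 := Finset.card_insert_le b ({x', a', b'} : Finset V)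
      have g4 := Finset.card_insert_le x' ({a', b'} : Finset V)
      have g5 := Finset.card_insert_le a' ({b'} : Finset V)
      simp only [Finset.card_singleton] at *
      omega
    have h5 := Finset.card_sdiff_of_subset (Finset.subset_univ S6)
    have h7 : S6.card ≤ Finset.univ.card := Finset.card_le_card (Finset.subset_univ _)
    rw [Finset.card_univ] at h5 h7
    rw [hRdef, h5]
    omega
  have nbase : ∀ r, r ≠ x → r ≠ a → r ≠ b → r ≠ x' → r ≠ a' → r ≠ b' →
      ¬ G.Adj x r ∧ ¬ G.Adj a r ∧ ¬ G.Adj b r := by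
    intro r h1 h2 h3 h4 h5 h6
    refine ⟨fun h => ?_, fun h => ?_, fun h => ?_⟩
    · rcases Nx r h with e | e | e
      exacts [h2 e, h3 e, h4 e]
    · rcases Na r h with e | e | e
      exacts [h1 e, h3 e, h5 e]
    · rcases Nb r h with e | e | e
      exacts [h1 e, h2 e, h6 e]
  have hI : ∀ r, r ≠ x → r ≠ a → r ≠ b → r ≠ x' → r ≠ a' → r ≠ b' →
      2 ≤ eind G x' r + eind G a' r + eind G b' r := by
    intro r h1 h2 h3 h4 h5 h6
    obtain ⟨nxr, nar, nbr⟩ := nbase r h1 h2 h3 h4 h5 h6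
    have h53 := hst {x, x', a', b', r} (card5 x x' a' b' r (Ne.symm dx'x) (Ne.symm da'x)
      (Ne.symm db'x) (Ne.symm h1) dx'a' dx'b' (Ne.symm h4) da'b' (Ne.symm h5) (Ne.symm h6))
    rw [edgesWithin_five G x x' a' b' r (Ne.symm dx'x) (Ne.symm da'x)
      (Ne.symm db'x) (Ne.symm h1) dx'a' dx'b' (Ne.symm h4) da'b' (Ne.symm h5)
      (Ne.symm h6)] at h53
    rw [eind1 G hxx', eind0 G nxa', eind0 G nxb', eind0 G nxr, eind0 G nx'a', eind0 G nx'b',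
        eind0 G na'b'] at h53
    have k1 := eind_le_one G x' r
    have k2 := eind_le_one G a' r
    have k3 := eind_le_one G b' r
    omega
  obtain ⟨t, htR, ht3⟩ := Finset.exists_subset_card_eq hRcard
  obtain ⟨r1, r2, r3, d12, d13, d23, rfl⟩ := Finset.card_eq_three.mp ht3
  have hm1 := memR r1 (htR (by simp))
  have hm2 := memR r2 (htR (by simp))
  have hm3 := memR r3 (htR (by simp))
  obtain ⟨e1x, e1a, e1b, e1x', e1a', e1b'⟩ := hm1
  obtain ⟨e2x, e2a, e2b, e2x', e2a', e2b'⟩ := hm2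
  obtain ⟨e3x, e3a, e3b, e3x', e3a', e3b'⟩ := hm3
  have htrip : 2 ≤ eind G r1 r2 + eind G r1 r3 + eind G r2 r3 := by
    obtain ⟨nxr1, nar1, nbr1⟩ := nbase r1 e1x e1a e1b e1x' e1a' e1b'
    obtain ⟨nxr2, nar2, nbr2⟩ := nbase r2 e2x e2a e2b e2x' e2a' e2b'
    obtain ⟨nxr3, nar3, nbr3⟩ := nbase r3 e3x e3a e3b e3x' e3a' e3b'
    have h53 := hst {a, x, r1, r2, r3} (card5 a x r1 r2 r3 (Ne.symm dxa) (Ne.symm e1a)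
      (Ne.symm e2a) (Ne.symm e3a) (Ne.symm e1x) (Ne.symm e2x) (Ne.symm e3x) d12 d13 d23)
    rw [edgesWithin_five G a x r1 r2 r3 (Ne.symm dxa) (Ne.symm e1a)
      (Ne.symm e2a) (Ne.symm e3a) (Ne.symm e1x) (Ne.symm e2x) (Ne.symm e3x) d12 d13 d23] at h53
    rw [eind1 G hxa.symm, eind0 G nar1, eind0 G nar2, eind0 G nar3, eind0 G nxr1,
        eind0 G nxr2, eind0 G nxr3] at h53
    omega
  have hEND : ∀ p q r : V,
      (p ≠ x ∧ p ≠ a ∧ p ≠ b ∧ p ≠ x' ∧ p ≠ a' ∧ p ≠ b') →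
      (q ≠ x ∧ q ≠ a ∧ q ≠ b ∧ q ≠ x' ∧ q ≠ a' ∧ q ≠ b') →
      (r ≠ x ∧ r ≠ a ∧ r ≠ b ∧ r ≠ x' ∧ r ≠ a' ∧ r ≠ b') →
      p ≠ q → q ≠ r → p ≠ r → G.Adj p q → G.Adj q r → False := by
    intro p q r hp hq hr dpq dqr dpr hpq hqr
    obtain ⟨px, pa, pb, px', pa', pb'⟩ := hp
    obtain ⟨qx, qa, qb, qx', qa', qb'⟩ := hq
    obtain ⟨rx, ra, rb, rx', ra', rb'⟩ := hr
    have h1 := hI p px pa pb px' pa' pb'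
    have h2 := hI q qx qa qb qx' qa' qb'
    have h3 := hI r rx ra rb rx' ra' rb'
    obtain ⟨v, hvmem, hvp, hvq⟩ := common3 G x' a' b' p q h1 h2
    obtain ⟨w, hwmem, hwp, hwr⟩ := common3 G x' a' b' p r h1 h3
    have hvne : v ≠ p ∧ v ≠ q ∧ v ≠ r := by
      rcases hvmem with rfl | rfl | rfl
      exacts [⟨Ne.symm px', Ne.symm qx', Ne.symm rx'⟩, ⟨Ne.symm pa', Ne.symm qa', Ne.symm ra'⟩,
        ⟨Ne.symm pb', Ne.symm qb', Ne.symm rb'⟩]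
    have hwne : w ≠ p ∧ w ≠ q ∧ w ≠ r := by
      rcases hwmem with rfl | rfl | rfl
      exacts [⟨Ne.symm px', Ne.symm qx', Ne.symm rx'⟩, ⟨Ne.symm pa', Ne.symm qa', Ne.symm ra'⟩,
        ⟨Ne.symm pb', Ne.symm qb', Ne.symm rb'⟩]
    by_cases hwv : w = v
    · subst hwv
      exact ND w q r p hvq hqr hwr hvp.symm hpq hvne.1 (Ne.symm dpq) (Ne.symm dpr)
    · exact NH q p w r v hpq.symm hwp.symm hwr hqr.symm hvq hvp (Ne.symm hwne.2.1) dpr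
        hwv (Ne.symm hvne.2.2)
  by_cases g12 : G.Adj r1 r2
  · by_cases g13 : G.Adj r1 r3
    · exact hEND r2 r1 r3 ⟨e2x, e2a, e2b, e2x', e2a', e2b'⟩ ⟨e1x, e1a, e1b, e1x', e1a', e1b'⟩
        ⟨e3x, e3a, e3b, e3x', e3a', e3b'⟩ (Ne.symm d12) d13 d23 g12.symm g13
    · by_cases g23 : G.Adj r2 r3
      · exact hEND r1 r2 r3 ⟨e1x, e1a, e1b, e1x', e1a', e1b'⟩ ⟨e2x, e2a, e2b, e2x', e2a', e2b'⟩
          ⟨e3x, e3a, e3b, e3x', e3a', e3b'⟩ d12 d23 d13 g12 g23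
      · rw [eind0 G g13, eind0 G g23] at htrip
        have := eind_le_one G r1 r2
        omega
  · by_cases g13 : G.Adj r1 r3
    · by_cases g23 : G.Adj r2 r3
      · exact hEND r1 r3 r2 ⟨e1x, e1a, e1b, e1x', e1a', e1b'⟩ ⟨e3x, e3a, e3b, e3x', e3a', e3b'⟩
          ⟨e2x, e2a, e2b, e2x', e2a', e2b'⟩ d13 (Ne.symm d23) d12 g13 g23.symm
      · rw [eind0 G g12, eind0 G g23] at htrip
        have := eind_le_one G r1 r3
        omega
    · rw [eind0 G g12, eind0 G g13] at htrip
      have := eind_le_one G r2 r3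
      omega
end

section
/- Let G be a graph with minimum degree at least 3 and at least 9 vertices such that G contains neither a C~3 nor a C~4 as a subgraph, and every induced subgraph of G on 5 vertices has at least 3 edges. Then G contains no bowtie as a subgraph. -/
/-- The bowtie: two triangles `{0,1,2}` and `{2,3,4}` sharing the vertex `2`. -/
def bowtie : SimpleGraph (Fin 5) :=
  SimpleGraph.fromRel (fun i j =>
    ((i : ℕ) = 0 ∧ (j : ℕ) = 1) ∨ ((i : ℕ) = 0 ∧ (j : ℕ) = 2) ∨
    ((i : ℕ) = 1 ∧ (j : ℕ) = 2) ∨ ((i : ℕ) = 2 ∧ (j : ℕ) = 3) ∨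
    ((i : ℕ) = 2 ∧ (j : ℕ) = 4) ∨ ((i : ℕ) = 3 ∧ (j : ℕ) = 4))

def tcRel (ℓ : ℕ) : (Fin ℓ ⊕ Unit) → (Fin ℓ ⊕ Unit) → Prop := fun a b =>
    match a, b with
    | Sum.inl i, Sum.inl j => (SimpleGraph.cycleGraph ℓ).Adj i j
    | Sum.inl i, Sum.inr _ => (i : ℕ) = 0 ∨ (i : ℕ) = 1
    | _, _ => False

instance (ℓ : ℕ) : DecidableRel (tcRel ℓ) := fun a b =>
  match a, b with
  | Sum.inl i, Sum.inl j => inferInstanceAs (Decidable ((SimpleGraph.cycleGraph ℓ).Adj i j))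
  | Sum.inl _, Sum.inr _ => inferInstanceAs (Decidable (_ ∨ _))
  | Sum.inr _, Sum.inl _ => inferInstanceAs (Decidable False)
  | Sum.inr _, Sum.inr _ => inferInstanceAs (Decidable False)

instance (ℓ : ℕ) : DecidableRel (tildeC ℓ).Adj := fun a b =>
  decidable_of_iff (a ≠ b ∧ (tcRel ℓ a b ∨ tcRel ℓ b a)) Iff.rfl

instance : DecidableRel bowtie.Adj := fun a b =>
  decidable_of_iff (a ≠ b ∧ _) Iff.rfl

lemma mkC3 {V : Type*} (G : SimpleGraph V) (x y z w : V)
    (hxy : G.Adj x y) (hyz : G.Adj y z) (hxz : G.Adj x z)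
    (hwx : G.Adj w x) (hwy : G.Adj w y) (hwz : w ≠ z) :
    ContainsCopy (tildeC 3) G := by
  have d1 := hxy.ne; have d2 := hyz.ne; have d3 := hxz.ne
  have d4 := hwx.ne; have d5 := hwy.ne
  have hinj : Function.Injective (fun u : Fin 3 ⊕ Unit => match u with
      | .inl 0 => x | .inl 1 => y | .inl 2 => z | .inr _ => w) := by
    intro u v huv
    fin_cases u <;> fin_cases v <;> simp_all
  refine ⟨⟨_, ?_⟩, hinj⟩
  intro u v h
  fin_cases u <;> fin_cases v <;>
    first
      | exact absurd h (by decide)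
      | exact hxy | exact hxy.symm | exact hyz | exact hyz.symm
      | exact hxz | exact hxz.symm | exact hwx | exact hwx.symm
      | exact hwy | exact hwy.symm

lemma mkC4 {V : Type*} (G : SimpleGraph V) (x0 x1 x2 x3 w : V)
    (h01 : G.Adj x0 x1) (h12 : G.Adj x1 x2) (h23 : G.Adj x2 x3) (h30 : G.Adj x3 x0)
    (hw0 : G.Adj w x0) (hw1 : G.Adj w x1)
    (h02 : x0 ≠ x2) (h13 : x1 ≠ x3) (hw2 : w ≠ x2) (hw3 : w ≠ x3) :
    ContainsCopy (tildeC 4) G := by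
  have d1 := h01.ne; have d2 := h12.ne; have d3 := h23.ne
  have d4 := h30.ne; have d5 := hw0.ne; have d6 := hw1.ne
  have hinj : Function.Injective (fun u : Fin 4 ⊕ Unit => match u with
      | .inl 0 => x0 | .inl 1 => x1 | .inl 2 => x2 | .inl 3 => x3 | .inr _ => w) := by
    intro u v huv
    fin_cases u <;> fin_cases v <;> simp_all
  refine ⟨⟨_, ?_⟩, hinj⟩
  intro u v h
  fin_cases u <;> fin_cases v <;>
    first
      | exact absurd h (by decide)
      | exact h01 | exact h01.symm | exact h12 | exact h12.symm
      | exact h23 | exact h23.symm | exact h30 | exact h30.symm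
      | exact hw0 | exact hw0.symm | exact hw1 | exact hw1.symm

/-- A [5,3]-graph of order at least 9 with minimum degree at least 3 containing neither a
`C~3` nor a `C~4` contains no bowtie. -/
theorem stmt6 {V : Type*} [Fintype V] [DecidableEq V] (G : SimpleGraph V) [DecidableRel G.Adj]
    (hδ : ∀ v : V, 3 ≤ G.degree v) (hn : 9 ≤ Fintype.card V) (hst : IsSTGraph G 5 3)
    (h3 : ¬ ContainsCopy (tildeC 3) G) (h4 : ¬ ContainsCopy (tildeC 4) G) :
    ¬ ContainsCopy bowtie G := by
  rintro ⟨f, hf⟩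
  set a := f 0 with ha0
  set b := f 1 with hb0
  set c := f 2 with hc0
  set d := f 3 with hd0
  set e := f 4 with he0
  have hab : G.Adj a b := f.map_adj (by decide)
  have hac : G.Adj a c := f.map_adj (by decide)
  have hbc : G.Adj b c := f.map_adj (by decide)
  have hcd : G.Adj c d := f.map_adj (by decide)
  have hce : G.Adj c e := f.map_adj (by decide)
  have hde : G.Adj d e := f.map_adj (by decide)
  have nad : a ≠ d := hf.ne (by decide)
  have nae : a ≠ e := hf.ne (by decide)
  have nbd : b ≠ d := hf.ne (by decide)
  have nbe : b ≠ e := hf.ne (by decide)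
  have ncb' : c ≠ b := hbc.ne'
  -- a not adjacent to d, e ; b not adjacent to d, e
  have nAad : ¬ G.Adj a d := fun h =>
    h4 (mkC4 G c d a b e hcd h.symm hab hbc hce.symm hde.symm hac.ne' nbd.symm nae.symm nbe.symm)
  have nAae : ¬ G.Adj a e := fun h =>
    h4 (mkC4 G c e a b d hce h.symm hab hbc hcd.symm hde hac.ne' nbe.symm nad.symm nbd.symm)
  have nAbd : ¬ G.Adj b d := fun h =>
    h4 (mkC4 G c d b a e hcd h.symm hab.symm hac hce.symm hde.symm hbc.ne' nad.symm nbe.symm nae.symm)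
  have nAbe : ¬ G.Adj b e := fun h =>
    h4 (mkC4 G c e b a d hce h.symm hab.symm hac hcd.symm hde hbc.ne' nae.symm nbd.symm nad.symm)
  -- pick a' : a neighbor of a outside {b,c,d,e}
  have hA : (G.neighborFinset a \ {b, c, d, e}).Nonempty := by
    rw [Finset.sdiff_nonempty]
    intro hsub
    have h2 : G.neighborFinset a ⊆ {b, c} := by
      intro x hx
      have hx' := hsub hx
      rw [SimpleGraph.mem_neighborFinset] at hx
      simp only [Finset.mem_insert, Finset.mem_singleton] at hx' ⊢
      rcases hx' with rfl | rfl | rfl | rfl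
      · exact Or.inl rfl
      · exact Or.inr rfl
      · exact absurd hx nAad
      · exact absurd hx nAae
    have hcc := Finset.card_le_card h2
    have h22 : ({b, c} : Finset V).card ≤ 2 := by
      apply le_trans (Finset.card_insert_le _ _); simp
    have hd3 := hδ a
    rw [SimpleGraph.degree] at hd3
    omega
  obtain ⟨a', ha'⟩ := hA
  rw [Finset.mem_sdiff, SimpleGraph.mem_neighborFinset] at ha'
  obtain ⟨haa', ha'ne⟩ := ha'
  simp only [Finset.mem_insert, Finset.mem_singleton, not_or] at ha'ne
  obtain ⟨na'b, na'c, na'd, na'e⟩ := ha'ne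
  -- b' similarly
  have hB : (G.neighborFinset b \ {a, c, d, e}).Nonempty := by
    rw [Finset.sdiff_nonempty]
    intro hsub
    have h2 : G.neighborFinset b ⊆ {a, c} := by
      intro x hx
      have hx' := hsub hx
      rw [SimpleGraph.mem_neighborFinset] at hx
      simp only [Finset.mem_insert, Finset.mem_singleton] at hx' ⊢
      rcases hx' with rfl | rfl | rfl | rfl
      · exact Or.inl rfl
      · exact Or.inr rfl
      · exact absurd hx nAbd
      · exact absurd hx nAbe
    have hcc := Finset.card_le_card h2
    have h22 : ({a, c} : Finset V).card ≤ 2 := by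
      apply le_trans (Finset.card_insert_le _ _); simp
    have hd3 := hδ b
    rw [SimpleGraph.degree] at hd3
    omega
  obtain ⟨b', hb'⟩ := hB
  rw [Finset.mem_sdiff, SimpleGraph.mem_neighborFinset] at hb'
  obtain ⟨hbb', hb'ne⟩ := hb'
  simp only [Finset.mem_insert, Finset.mem_singleton, not_or] at hb'ne
  obtain ⟨nb'a, nb'c, nb'd, nb'e⟩ := hb'ne
  -- nonadjacencies of a'
  have nAa'b : ¬ G.Adj a' b := fun h =>
    h3 (mkC3 G a b c a' hab hbc hac haa'.symm h na'c)
  have nAa'd : ¬ G.Adj a' d := fun h =>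
    h4 (mkC4 G a c d a' b hac hcd h.symm haa'.symm hab.symm hbc nad (Ne.symm na'c) nbd (Ne.symm na'b))
  have nAa'e : ¬ G.Adj a' e := fun h =>
    h4 (mkC4 G a c e a' b hac hce h.symm haa'.symm hab.symm hbc nae (Ne.symm na'c) nbe (Ne.symm na'b))
  have nAab' : ¬ G.Adj a b' := fun h =>
    h3 (mkC3 G a b c b' hab hbc hac h.symm hbb'.symm nb'c)
  have nAb'd : ¬ G.Adj b' d := fun h =>
    h4 (mkC4 G b c d b' a hbc hcd h.symm hbb'.symm hab hac nbd (Ne.symm nb'c) nad (Ne.symm nb'a))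
  have nAb'e : ¬ G.Adj b' e := fun h =>
    h4 (mkC4 G b c e b' a hbc hce h.symm hbb'.symm hab hac nbe (Ne.symm nb'c) nae (Ne.symm nb'a))
  have na'b' : a' ≠ b' := fun h => nAa'b (by rw [h]; exact hbb'.symm)
  have nAa'b' : ¬ G.Adj a' b' := fun h =>
    h4 (mkC4 G a b b' a' c hab hbb' h.symm haa'.symm hac.symm hbc.symm
      (Ne.symm nb'a) (Ne.symm na'b) (Ne.symm nb'c) (Ne.symm na'c))
  -- the 5-set with only 2 edges
  have n1 : a ∉ ({a', b', d, e} : Finset V) := by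
    simp only [Finset.mem_insert, Finset.mem_singleton]
    push_neg
    exact ⟨haa'.ne, (Ne.symm nb'a), nad, nae⟩
  have n2 : a' ∉ ({b', d, e} : Finset V) := by
    simp only [Finset.mem_insert, Finset.mem_singleton]
    push_neg
    exact ⟨na'b', na'd, na'e⟩
  have n3 : b' ∉ ({d, e} : Finset V) := by
    simp only [Finset.mem_insert, Finset.mem_singleton]
    push_neg
    exact ⟨nb'd, nb'e⟩
  have n4 : d ∉ ({e} : Finset V) := by
    simp only [Finset.mem_singleton]
    exact hde.ne
  have hcard : ({a, a', b', d, e} : Finset V).card = 5 := by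
    rw [Finset.card_insert_of_notMem n1, Finset.card_insert_of_notMem n2,
      Finset.card_insert_of_notMem n3, Finset.card_insert_of_notMem n4,
      Finset.card_singleton]
  have hsub : (({a, a', b', d, e} : Finset V).sym2.filter (· ∈ G.edgeSet)) ⊆
      {s(a, a'), s(d, e)} := by
    intro x hx
    induction x using Sym2.ind with
    | _ u v =>
      rw [Finset.mem_filter, Finset.mk_mem_sym2_iff] at hx
      obtain ⟨⟨hu, hv⟩, hadj⟩ := hx
      rw [SimpleGraph.mem_edgeSet] at hadj
      simp only [Finset.mem_insert, Finset.mem_singleton] at hu hv ⊢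
      rcases hu with rfl | rfl | rfl | rfl | rfl <;> rcases hv with rfl | rfl | rfl | rfl | rfl <;>
        first
          | exact absurd hadj G.irrefl
          | exact Or.inl rfl
          | exact Or.inl Sym2.eq_swap
          | exact Or.inr rfl
          | exact Or.inr Sym2.eq_swap
          | exact absurd hadj (by assumption)
          | exact absurd hadj.symm (by assumption)
  have h5 := hst {a, a', b', d, e} hcard
  have h6 := Finset.card_le_card hsub
  have h7 : ({s(a, a'), s(d, e)} : Finset (Sym2 V)).card ≤ 2 :=
    (Finset.card_insert_le _ _).trans (by simp)
  have h8 : edgesWithin G {a, a', b', d, e} =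
      (({a, a', b', d, e} : Finset V).sym2.filter (· ∈ G.edgeSet)).card := rfl
  omega
end

section
/- Let G be a connected graph on at least 9 vertices with minimum degree at least 3 in which every induced subgraph on 5 vertices has at least 3 edges, and suppose G contains neither a C~3 nor a C~4 nor a bowtie as a subgraph. Then G contains no 1-dumbbell as a subgraph. -/
/-- The `m`-dumbbell: two disjoint triangles `{0,1,2}` and `{m+2,m+3,m+4}` joined by the
path `2,3,…,m+2` of length `m`. -/
def dumbbell (m : ℕ) : SimpleGraph (Fin (m + 5)) :=
  SimpleGraph.fromRel (fun i j =>
    (j : ℕ) = (i : ℕ) + 1 ∨ ((i : ℕ) = 0 ∧ (j : ℕ) = 2) ∨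
      ((i : ℕ) = m + 2 ∧ (j : ℕ) = m + 4))

/- ### Auxiliary lemmas -/

/-- No "diamond" (`C~3`): a triangle `x,y,z` with an extra vertex `w` adjacent to `x,y`. -/
lemma noDiamond {V : Type*} (G : SimpleGraph V)
    (h3 : ¬ ContainsCopy (tildeC 3) G)
    {x y z w : V} (hxy : x ≠ y) (hxz : x ≠ z) (hyz : y ≠ z)
    (hwx : w ≠ x) (hwy : w ≠ y) (hwz : w ≠ z)
    (axy : G.Adj x y) (axz : G.Adj x z) (ayz : G.Adj y z)
    (awx : G.Adj w x) (awy : G.Adj w y) : False := by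
  apply h3
  have hinj : Function.Injective (Sum.elim ![x, y, z] fun _ : Unit => w) := by
    intro a b h
    rcases a with i | u <;> rcases b with j | u' <;>
      [ (fin_cases i <;> fin_cases j) ; fin_cases i ; fin_cases j ; skip ] <;>
      simp_all
  refine ⟨⟨Sum.elim ![x, y, z] fun _ => w, ?_⟩, hinj⟩
  intro a b hab
  simp only [tildeC, SimpleGraph.fromRel_adj] at hab
  rcases a with i | u <;> rcases b with j | u' <;>
    [ (fin_cases i <;> fin_cases j) ; fin_cases i ; fin_cases j ; skip ] <;>
    simp_all [SimpleGraph.cycleGraph_adj', axy.symm, axz.symm, ayz.symm, awx.symm, awy.symm]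

/-- No `C~4`: a 4-cycle `x,y,z,u` with an extra vertex `w` adjacent to `x,y`. -/
lemma noC4 {V : Type*} (G : SimpleGraph V)
    (h4 : ¬ ContainsCopy (tildeC 4) G)
    {x y z u w : V} (hxy : x ≠ y) (hxz : x ≠ z) (hxu : x ≠ u) (hyz : y ≠ z) (hyu : y ≠ u)
    (hzu : z ≠ u) (hwx : w ≠ x) (hwy : w ≠ y) (hwz : w ≠ z) (hwu : w ≠ u)
    (axy : G.Adj x y) (ayz : G.Adj y z) (azu : G.Adj z u) (aux : G.Adj u x)
    (awx : G.Adj w x) (awy : G.Adj w y) : False := by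
  apply h4
  have hinj : Function.Injective (Sum.elim ![x, y, z, u] fun _ : Unit => w) := by
    intro a b h
    rcases a with i | p <;> rcases b with j | p' <;>
      [ (fin_cases i <;> fin_cases j) ; fin_cases i ; fin_cases j ; skip ] <;>
      simp_all
  refine ⟨⟨Sum.elim ![x, y, z, u] fun _ => w, ?_⟩, hinj⟩
  intro a b hab
  simp only [tildeC, SimpleGraph.fromRel_adj] at hab
  rcases a with i | p <;> rcases b with j | p' <;>
    [ (fin_cases i <;> fin_cases j) ; fin_cases i ; fin_cases j ; skip ] <;>
    first
    | (exfalso; revert hab; simp [SimpleGraph.cycleGraph_adj']; decide)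
    | simp_all [SimpleGraph.cycleGraph_adj', axy.symm, ayz.symm, azu.symm, aux.symm,
        awx.symm, awy.symm]

/-- No bowtie: triangles `x,y,z` and `z,u,w` on five distinct vertices. -/
lemma noBowtie {V : Type*} (G : SimpleGraph V)
    (hbow : ¬ ContainsCopy bowtie G)
    {x y z u w : V} (hxy : x ≠ y) (hxz : x ≠ z) (hxu : x ≠ u) (hxw : x ≠ w)
    (hyz : y ≠ z) (hyu : y ≠ u) (hyw : y ≠ w) (hzu : z ≠ u) (hzw : z ≠ w) (huw : u ≠ w)
    (axy : G.Adj x y) (axz : G.Adj x z) (ayz : G.Adj y z)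
    (azu : G.Adj z u) (azw : G.Adj z w) (auw : G.Adj u w) : False := by
  apply hbow
  have hinj : Function.Injective (![x, y, z, u, w]) := by
    intro a b h; fin_cases a <;> fin_cases b <;> simp_all
  refine ⟨⟨![x, y, z, u, w], ?_⟩, hinj⟩
  intro a b hab
  simp only [bowtie, SimpleGraph.fromRel_adj] at hab
  fin_cases a <;> fin_cases b <;>
    simp_all [axy.symm, axz.symm, ayz.symm, azu.symm, azw.symm, auw.symm]

lemma edgesWithin_le_two {V : Type*} [DecidableEq V] (G : SimpleGraph V) [DecidableRel G.Adj]
    (A : Finset V) (p q : Sym2 V)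
    (h : ∀ x ∈ A, ∀ y ∈ A, G.Adj x y → s(x, y) = p ∨ s(x, y) = q) :
    edgesWithin G A ≤ 2 := by
  have hsub : A.sym2.filter (· ∈ G.edgeSet) ⊆ {p, q} := by
    intro e he
    simp only [Finset.mem_filter] at he
    obtain ⟨h1, h2⟩ := he
    induction e using Sym2.ind with
    | _ x y =>
      rw [Finset.mk_mem_sym2_iff] at h1
      have := h x h1.1 y h1.2 ((G.mem_edgeSet).mp h2)
      simpa [Finset.mem_insert] using this
  exact (Finset.card_le_card hsub).trans ((Finset.card_insert_le _ _).trans (by simp))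

lemma card_five {V : Type*} [DecidableEq V] {a b c d e : V}
    (hab : a ≠ b) (hac : a ≠ c) (had : a ≠ d) (hae : a ≠ e) (hbc : b ≠ c) (hbd : b ≠ d)
    (hbe : b ≠ e) (hcd : c ≠ d) (hce : c ≠ e) (hde : d ≠ e) :
    ({a, b, c, d, e} : Finset V).card = 5 := by
  rw [Finset.card_insert_of_notMem (by simp [hab, hac, had, hae]),
      Finset.card_insert_of_notMem (by simp [hbc, hbd, hbe]),
      Finset.card_insert_of_notMem (by simp [hcd, hce]),
      Finset.card_insert_of_notMem (by simp [hde]),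
      Finset.card_singleton]

lemma card_six {V : Type*} [DecidableEq V] {a b c d e g : V}
    (hab : a ≠ b) (hac : a ≠ c) (had : a ≠ d) (hae : a ≠ e) (hag : a ≠ g)
    (hbc : b ≠ c) (hbd : b ≠ d) (hbe : b ≠ e) (hbg : b ≠ g)
    (hcd : c ≠ d) (hce : c ≠ e) (hcg : c ≠ g) (hde : d ≠ e) (hdg : d ≠ g) (heg : e ≠ g) :
    ({a, b, c, d, e, g} : Finset V).card = 6 := by
  rw [Finset.card_insert_of_notMem (by simp [hab, hac, had, hae, hag]),
      card_five hbc hbd hbe hbg hcd hce hcg hde hdg heg]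

/-- A connected [5,3]-graph of order at least 9 with minimum degree at least 3 containing
neither a `C~3` nor a `C~4` nor a bowtie contains no 1-dumbbell. -/
theorem stmt7 {V : Type*} [Fintype V] [DecidableEq V] (G : SimpleGraph V) [DecidableRel G.Adj]
    (hcon : G.Connected) (hδ : ∀ v : V, 3 ≤ G.degree v) (hn : 9 ≤ Fintype.card V)
    (hst : IsSTGraph G 5 3) (h3 : ¬ ContainsCopy (tildeC 3) G)
    (h4 : ¬ ContainsCopy (tildeC 4) G) (hb : ¬ ContainsCopy bowtie G) :
    ¬ ContainsCopy (dumbbell 1) G := by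
  rintro ⟨f, hf⟩
  have dne : ∀ i j : Fin (1 + 5), i ≠ j → f i ≠ f j := fun i j hij h => hij (hf h)
  have adj : ∀ i j : Fin (1 + 5), (dumbbell 1).Adj i j → G.Adj (f i) (f j) :=
    fun i j h => f.map_adj h
  -- the seven edges of the dumbbell
  have a01 : G.Adj (f 0) (f 1) := adj 0 1 (by simp only [dumbbell, SimpleGraph.fromRel_adj]; decide)
  have a02 : G.Adj (f 0) (f 2) := adj 0 2 (by simp only [dumbbell, SimpleGraph.fromRel_adj]; decide)
  have a12 : G.Adj (f 1) (f 2) := adj 1 2 (by simp only [dumbbell, SimpleGraph.fromRel_adj]; decide)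
  have a23 : G.Adj (f 2) (f 3) := adj 2 3 (by simp only [dumbbell, SimpleGraph.fromRel_adj]; decide)
  have a34 : G.Adj (f 3) (f 4) := adj 3 4 (by simp only [dumbbell, SimpleGraph.fromRel_adj]; decide)
  have a45 : G.Adj (f 4) (f 5) := adj 4 5 (by simp only [dumbbell, SimpleGraph.fromRel_adj]; decide)
  have a35 : G.Adj (f 3) (f 5) := adj 3 5 (by simp only [dumbbell, SimpleGraph.fromRel_adj]; decide)
  -- distinctness
  have d01 : f 0 ≠ f 1 := dne 0 1 (by decide)
  have d02 : f 0 ≠ f 2 := dne 0 2 (by decide)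
  have d03 : f 0 ≠ f 3 := dne 0 3 (by decide)
  have d04 : f 0 ≠ f 4 := dne 0 4 (by decide)
  have d05 : f 0 ≠ f 5 := dne 0 5 (by decide)
  have d12 : f 1 ≠ f 2 := dne 1 2 (by decide)
  have d13 : f 1 ≠ f 3 := dne 1 3 (by decide)
  have d14 : f 1 ≠ f 4 := dne 1 4 (by decide)
  have d15 : f 1 ≠ f 5 := dne 1 5 (by decide)
  have d23 : f 2 ≠ f 3 := dne 2 3 (by decide)
  have d24 : f 2 ≠ f 4 := dne 2 4 (by decide)
  have d25 : f 2 ≠ f 5 := dne 2 5 (by decide)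
  have d34 : f 3 ≠ f 4 := dne 3 4 (by decide)
  have d35 : f 3 ≠ f 5 := dne 3 5 (by decide)
  have d45 : f 4 ≠ f 5 := dne 4 5 (by decide)
  -- non-edges inside the dumbbell
  have n03 : ¬ G.Adj (f 0) (f 3) := fun h =>
    noDiamond G h3 d02 d01 d12.symm d03.symm d23.symm d13.symm
      a02 a01 a12.symm h.symm a23.symm
  have n04 : ¬ G.Adj (f 0) (f 4) := fun h =>
    noC4 G h4 d34 d03.symm d23.symm d04.symm d24.symm d02
      d35.symm d45.symm d05.symm d25.symm a34 h.symm a02 a23 a35.symm a45.symm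
  have n05 : ¬ G.Adj (f 0) (f 5) := fun h =>
    noC4 G h4 d35 d03.symm d23.symm d05.symm d25.symm d02
      d34.symm d45 d04.symm d24.symm a35 h.symm a02 a23 a34.symm a45
  have n14 : ¬ G.Adj (f 1) (f 4) := fun h =>
    noC4 G h4 d34 d13.symm d23.symm d14.symm d24.symm d12
      d35.symm d45.symm d15.symm d25.symm a34 h.symm a12 a23 a35.symm a45.symm
  have n15 : ¬ G.Adj (f 1) (f 5) := fun h =>
    noC4 G h4 d35 d13.symm d23.symm d15.symm d25.symm d12
      d34.symm d45 d14.symm d24.symm a35 h.symm a12 a23 a34.symm a45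
  have n25 : ¬ G.Adj (f 2) (f 5) := fun h =>
    noDiamond G h3 d35 d34 d45.symm d23 d25 d24
      a35 a34 a45.symm a23 h
  -- every vertex off {f0,f1,f4,f5} is adjacent to one of them
  have adj4 : ∀ t : V, t ≠ f 0 → t ≠ f 1 → t ≠ f 4 → t ≠ f 5 →
      G.Adj t (f 0) ∨ G.Adj t (f 1) ∨ G.Adj t (f 4) ∨ G.Adj t (f 5) := by
    intro t o0 o1 o4 o5
    by_contra hc
    push_neg at hc
    obtain ⟨c0, c1, c4, c5⟩ := hc
    have hcard : ({f 0, f 1, f 4, f 5, t} : Finset V).card = 5 :=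
      card_five d01 d04 d05 o0.symm d14 d15 o1.symm d45 o4.symm o5.symm
    have hle : edgesWithin G ({f 0, f 1, f 4, f 5, t} : Finset V) ≤ 2 := by
      apply edgesWithin_le_two G _ s(f 0, f 1) s(f 4, f 5)
      intro a ha b hbm hadj
      simp only [Finset.mem_insert, Finset.mem_singleton] at ha hbm
      rcases ha with rfl | rfl | rfl | rfl | rfl <;> rcases hbm with rfl | rfl | rfl | rfl | rfl <;>
        first
        | exact absurd hadj G.irrefl
        | exact absurd hadj ‹_›
        | exact absurd hadj.symm ‹_›
        | exact Or.inl rfl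
        | exact Or.inl Sym2.eq_swap
        | exact Or.inr rfl
        | exact Or.inr Sym2.eq_swap
    have := hst _ hcard
    omega
  -- no vertex outside the dumbbell is adjacent to f2 or f3
  have ntv2 : ∀ t : V, t ≠ f 0 → t ≠ f 1 → t ≠ f 2 → t ≠ f 3 → t ≠ f 4 → t ≠ f 5 →
      ¬ G.Adj t (f 2) := by
    intro t o0 o1 o2 o3 o4 o5 h
    rcases adj4 t o0 o1 o4 o5 with h0 | h1 | h4' | h5'
    · exact noDiamond G h3 d02 d01 d12.symm o0 o2 o1 a02 a01 a12.symm h0 h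
    · exact noDiamond G h3 d12 d01.symm d02.symm o1 o2 o0 a12 a01.symm a02.symm h1 h
    · exact noC4 G h4 d34 o3.symm d23.symm o4.symm d24.symm o2
        d35.symm d45.symm o5.symm d25.symm a34 h4'.symm h a23 a35.symm a45.symm
    · exact noC4 G h4 d35 o3.symm d23.symm o5.symm d25.symm o2
        d34.symm d45 o4.symm d24.symm a35 h5'.symm h a23 a34.symm a45
  have ntv3 : ∀ t : V, t ≠ f 0 → t ≠ f 1 → t ≠ f 2 → t ≠ f 3 → t ≠ f 4 → t ≠ f 5 →
      ¬ G.Adj t (f 3) := by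
    intro t o0 o1 o2 o3 o4 o5 h
    rcases adj4 t o0 o1 o4 o5 with h0 | h1 | h4' | h5'
    · exact noC4 G h4 d02.symm o2.symm d23 o0.symm d03 o3
        d12 d01.symm o1.symm d13 a02.symm h0.symm h a23.symm a12 a01.symm
    · exact noC4 G h4 d12.symm o2.symm d23 o1.symm d13 o3
        d02 d01 o0.symm d03 a12.symm h1.symm h a23.symm a02 a01
    · exact noDiamond G h3 d34 d35 d45 o3 o4 o5 a34 a35 a45 h h4'
    · exact noDiamond G h3 d35 d34 d45.symm o3 o5 o4 a35 a34 a45.symm h h5'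
  -- two adjacent outside vertices cannot both attach to {f0,f1}, nor both to {f4,f5}
  have hX0 : ∀ t t' : V,
      (t ≠ f 0 ∧ t ≠ f 1 ∧ t ≠ f 2 ∧ t ≠ f 3 ∧ t ≠ f 4 ∧ t ≠ f 5) →
      (t' ≠ f 0 ∧ t' ≠ f 1 ∧ t' ≠ f 2 ∧ t' ≠ f 3 ∧ t' ≠ f 4 ∧ t' ≠ f 5) →
      t ≠ t' → G.Adj t t' →
      (G.Adj t (f 0) ∨ G.Adj t (f 1)) → (G.Adj t' (f 0) ∨ G.Adj t' (f 1)) → False := by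
    rintro t t' ⟨o0, o1, o2, o3, o4, o5⟩ ⟨p0, p1, p2, p3, p4, p5⟩ htt hadj hA hA'
    rcases hA with ca | ca <;> rcases hA' with cb | cb
    · exact noBowtie G hb htt o0 o1 o2 p0 p1 p2 d01 d02 d12 hadj ca cb a01 a02 a12
    · exact noC4 G h4 d01 p0.symm o0.symm p1.symm o1.symm htt.symm
        d02.symm d12.symm p2.symm o2.symm a01 cb.symm hadj.symm ca a02.symm a12.symm
    · exact noC4 G h4 d01 o0.symm p0.symm o1.symm p1.symm htt
        d02.symm d12.symm o2.symm p2.symm a01 ca.symm hadj cb a02.symm a12.symm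
    · exact noBowtie G hb htt o1 o0 o2 p1 p0 p2 d01.symm d12 d02 hadj ca cb a01.symm a12 a02
  have hX4 : ∀ t t' : V,
      (t ≠ f 0 ∧ t ≠ f 1 ∧ t ≠ f 2 ∧ t ≠ f 3 ∧ t ≠ f 4 ∧ t ≠ f 5) →
      (t' ≠ f 0 ∧ t' ≠ f 1 ∧ t' ≠ f 2 ∧ t' ≠ f 3 ∧ t' ≠ f 4 ∧ t' ≠ f 5) →
      t ≠ t' → G.Adj t t' →
      (G.Adj t (f 4) ∨ G.Adj t (f 5)) → (G.Adj t' (f 4) ∨ G.Adj t' (f 5)) → False := by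
    rintro t t' ⟨o0, o1, o2, o3, o4, o5⟩ ⟨p0, p1, p2, p3, p4, p5⟩ htt hadj hB hB'
    rcases hB with ca | ca <;> rcases hB' with cb | cb
    · exact noBowtie G hb htt o4 o5 o3 p4 p5 p3 d45 d34.symm d35.symm
        hadj ca cb a45 a34.symm a35.symm
    · exact noC4 G h4 d45 p4.symm o4.symm p5.symm o5.symm htt.symm
        d34 d35 p3.symm o3.symm a45 cb.symm hadj.symm ca a34 a35
    · exact noC4 G h4 d45 o4.symm p4.symm o5.symm p5.symm htt
        d34 d35 o3.symm p3.symm a45 ca.symm hadj cb a34 a35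
    · exact noBowtie G hb htt o5 o4 o3 p5 p4 p3 d45.symm d35.symm d34.symm
        hadj ca cb a45.symm a35.symm a34.symm
  -- two nonadjacent outside vertices cannot both avoid {f4,f5}, nor both avoid {f0}
  have hYA : ∀ t t' : V,
      (t ≠ f 0 ∧ t ≠ f 1 ∧ t ≠ f 2 ∧ t ≠ f 3 ∧ t ≠ f 4 ∧ t ≠ f 5) →
      (t' ≠ f 0 ∧ t' ≠ f 1 ∧ t' ≠ f 2 ∧ t' ≠ f 3 ∧ t' ≠ f 4 ∧ t' ≠ f 5) →
      t ≠ t' → ¬ G.Adj t t' → ¬ G.Adj t (f 4) → ¬ G.Adj t (f 5) →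
      ¬ G.Adj t' (f 4) → ¬ G.Adj t' (f 5) → False := by
    rintro t t' ⟨o0, o1, o2, o3, o4, o5⟩ ⟨p0, p1, p2, p3, p4, p5⟩ htt hnadj nt4 nt5 ns4 ns5
    have m2 := ntv2 t o0 o1 o2 o3 o4 o5
    have m3 := ntv3 t o0 o1 o2 o3 o4 o5
    have m2' := ntv2 t' p0 p1 p2 p3 p4 p5
    have m3' := ntv3 t' p0 p1 p2 p3 p4 p5
    have hcard : ({t, t', f 2, f 3, f 5} : Finset V).card = 5 :=
      card_five htt o2 o3 o5 p2 p3 p5 d23 d25 d35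
    have hle : edgesWithin G ({t, t', f 2, f 3, f 5} : Finset V) ≤ 2 := by
      apply edgesWithin_le_two G _ s(f 2, f 3) s(f 3, f 5)
      intro a ha b hbm hadj
      simp only [Finset.mem_insert, Finset.mem_singleton] at ha hbm
      rcases ha with rfl | rfl | rfl | rfl | rfl <;> rcases hbm with rfl | rfl | rfl | rfl | rfl <;>
        first
        | exact absurd hadj G.irrefl
        | exact absurd hadj ‹_›
        | exact absurd hadj.symm ‹_›
        | exact Or.inl rfl
        | exact Or.inl Sym2.eq_swap
        | exact Or.inr rfl
        | exact Or.inr Sym2.eq_swap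
    have := hst _ hcard
    omega
  have hYB : ∀ t t' : V,
      (t ≠ f 0 ∧ t ≠ f 1 ∧ t ≠ f 2 ∧ t ≠ f 3 ∧ t ≠ f 4 ∧ t ≠ f 5) →
      (t' ≠ f 0 ∧ t' ≠ f 1 ∧ t' ≠ f 2 ∧ t' ≠ f 3 ∧ t' ≠ f 4 ∧ t' ≠ f 5) →
      t ≠ t' → ¬ G.Adj t t' → ¬ G.Adj t (f 0) → ¬ G.Adj t' (f 0) → False := by
    rintro t t' ⟨o0, o1, o2, o3, o4, o5⟩ ⟨p0, p1, p2, p3, p4, p5⟩ htt hnadj nt0 ns0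
    have m2 := ntv2 t o0 o1 o2 o3 o4 o5
    have m3 := ntv3 t o0 o1 o2 o3 o4 o5
    have m2' := ntv2 t' p0 p1 p2 p3 p4 p5
    have m3' := ntv3 t' p0 p1 p2 p3 p4 p5
    have hcard : ({t, t', f 2, f 3, f 0} : Finset V).card = 5 :=
      card_five htt o2 o3 o0 p2 p3 p0 d23 d02.symm d03.symm
    have hle : edgesWithin G ({t, t', f 2, f 3, f 0} : Finset V) ≤ 2 := by
      apply edgesWithin_le_two G _ s(f 2, f 3) s(f 0, f 2)
      intro a ha b hbm hadj
      simp only [Finset.mem_insert, Finset.mem_singleton] at ha hbm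
      rcases ha with rfl | rfl | rfl | rfl | rfl <;> rcases hbm with rfl | rfl | rfl | rfl | rfl <;>
        first
        | exact absurd hadj G.irrefl
        | exact absurd hadj ‹_›
        | exact absurd hadj.symm ‹_›
        | exact Or.inl rfl
        | exact Or.inl Sym2.eq_swap
        | exact Or.inr rfl
        | exact Or.inr Sym2.eq_swap
    have := hst _ hcard
    omega
  -- no outside vertex attaches to both {f0,f1} and {f4,f5}
  have notBoth : ∀ t : V,
      (t ≠ f 0 ∧ t ≠ f 1 ∧ t ≠ f 2 ∧ t ≠ f 3 ∧ t ≠ f 4 ∧ t ≠ f 5) →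
      (G.Adj t (f 0) ∨ G.Adj t (f 1)) → (G.Adj t (f 4) ∨ G.Adj t (f 5)) → False := by
    rintro t ⟨o0, o1, o2, o3, o4, o5⟩ hA hB
    have m2 := ntv2 t o0 o1 o2 o3 o4 o5
    have m3 := ntv3 t o0 o1 o2 o3 o4 o5
    obtain ⟨α, hαmem, hαadj⟩ : ∃ α, (α = f 0 ∨ α = f 1) ∧ G.Adj t α := by
      rcases hA with h | h
      exacts [⟨f 0, Or.inl rfl, h⟩, ⟨f 1, Or.inr rfl, h⟩]
    obtain ⟨β, hβmem, hβadj⟩ : ∃ β, (β = f 4 ∨ β = f 5) ∧ G.Adj t β := by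
      rcases hB with h | h
      exacts [⟨f 4, Or.inl rfl, h⟩, ⟨f 5, Or.inr rfl, h⟩]
    have hsub : G.neighborFinset t ⊆ {α, β} := by
      intro u hu
      rw [SimpleGraph.mem_neighborFinset] at hu
      simp only [Finset.mem_insert, Finset.mem_singleton]
      by_cases e0 : u = f 0
      · subst e0
        rcases hαmem with rfl | rfl
        · exact Or.inl rfl
        · exact (noDiamond G h3 d01 d02 d12 o0 o1 o2 a01 a02 a12 hu hαadj).elim
      by_cases e1 : u = f 1
      · subst e1
        rcases hαmem with rfl | rfl
        · exact (noDiamond G h3 d01 d02 d12 o0 o1 o2 a01 a02 a12 hαadj hu).elim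
        · exact Or.inl rfl
      by_cases e2 : u = f 2
      · exact (m2 (e2 ▸ hu)).elim
      by_cases e3 : u = f 3
      · exact (m3 (e3 ▸ hu)).elim
      by_cases e4 : u = f 4
      · subst e4
        rcases hβmem with rfl | rfl
        · exact Or.inr rfl
        · exact (noDiamond G h3 d45 d34.symm d35.symm o4 o5 o3
            a45 a34.symm a35.symm hu hβadj).elim
      by_cases e5 : u = f 5
      · subst e5
        rcases hβmem with rfl | rfl
        · exact (noDiamond G h3 d45 d34.symm d35.symm o4 o5 o3
            a45 a34.symm a35.symm hβadj hu).elim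
        · exact Or.inr rfl
      · exfalso
        have htu : t ≠ u := G.ne_of_adj hu
        rcases adj4 u e0 e1 e4 e5 with h' | h' | h' | h'
        · exact hX0 t u ⟨o0, o1, o2, o3, o4, o5⟩ ⟨e0, e1, e2, e3, e4, e5⟩ htu hu hA (Or.inl h')
        · exact hX0 t u ⟨o0, o1, o2, o3, o4, o5⟩ ⟨e0, e1, e2, e3, e4, e5⟩ htu hu hA (Or.inr h')
        · exact hX4 t u ⟨o0, o1, o2, o3, o4, o5⟩ ⟨e0, e1, e2, e3, e4, e5⟩ htu hu hB (Or.inl h')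
        · exact hX4 t u ⟨o0, o1, o2, o3, o4, o5⟩ ⟨e0, e1, e2, e3, e4, e5⟩ htu hu hB (Or.inr h')
    have hdeg : G.degree t ≤ 2 :=
      (Finset.card_le_card hsub).trans ((Finset.card_insert_le _ _).trans (by simp))
    have := hδ t
    omega
  -- two outside vertices cannot both attach to {f0,f1}; likewise for {f4,f5}
  have sameA : ∀ t t' : V,
      (t ≠ f 0 ∧ t ≠ f 1 ∧ t ≠ f 2 ∧ t ≠ f 3 ∧ t ≠ f 4 ∧ t ≠ f 5) →
      (t' ≠ f 0 ∧ t' ≠ f 1 ∧ t' ≠ f 2 ∧ t' ≠ f 3 ∧ t' ≠ f 4 ∧ t' ≠ f 5) →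
      t ≠ t' → (G.Adj t (f 0) ∨ G.Adj t (f 1)) → (G.Adj t' (f 0) ∨ G.Adj t' (f 1)) → False := by
    intro t t' ot ot' htt hA hA'
    by_cases hadj : G.Adj t t'
    · exact hX0 t t' ot ot' htt hadj hA hA'
    · have nb : ¬ (G.Adj t (f 4) ∨ G.Adj t (f 5)) := fun h => notBoth t ot hA h
      have nb' : ¬ (G.Adj t' (f 4) ∨ G.Adj t' (f 5)) := fun h => notBoth t' ot' hA' h
      push_neg at nb nb'
      exact hYA t t' ot ot' htt hadj nb.1 nb.2 nb'.1 nb'.2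
  have sameB : ∀ t t' : V,
      (t ≠ f 0 ∧ t ≠ f 1 ∧ t ≠ f 2 ∧ t ≠ f 3 ∧ t ≠ f 4 ∧ t ≠ f 5) →
      (t' ≠ f 0 ∧ t' ≠ f 1 ∧ t' ≠ f 2 ∧ t' ≠ f 3 ∧ t' ≠ f 4 ∧ t' ≠ f 5) →
      t ≠ t' → (G.Adj t (f 4) ∨ G.Adj t (f 5)) → (G.Adj t' (f 4) ∨ G.Adj t' (f 5)) → False := by
    intro t t' ot ot' htt hB hB'
    by_cases hadj : G.Adj t t'
    · exact hX4 t t' ot ot' htt hadj hB hB'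
    · have na : ¬ (G.Adj t (f 0) ∨ G.Adj t (f 1)) := fun h => notBoth t ot h hB
      have na' : ¬ (G.Adj t' (f 0) ∨ G.Adj t' (f 1)) := fun h => notBoth t' ot' h hB'
      push_neg at na na'
      exact hYB t t' ot ot' htt hadj na.1 na'.1
  -- find three vertices outside the dumbbell
  have hcard6 : ({f 0, f 1, f 2, f 3, f 4, f 5} : Finset V).card = 6 :=
    card_six d01 d02 d03 d04 d05 d12 d13 d14 d15 d23 d24 d25 d34 d35 d45
  have hTcard : 3 ≤ (({f 0, f 1, f 2, f 3, f 4, f 5} : Finset V)ᶜ).card := by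
    rw [Finset.card_compl, hcard6]
    omega
  obtain ⟨T3, hsub3, hcard3⟩ := Finset.exists_subset_card_eq hTcard
  obtain ⟨x, y, z, hxy, hxz, hyz, rfl⟩ := Finset.card_eq_three.mp hcard3
  have outx : x ≠ f 0 ∧ x ≠ f 1 ∧ x ≠ f 2 ∧ x ≠ f 3 ∧ x ≠ f 4 ∧ x ≠ f 5 := by
    have := hsub3 (by simp : x ∈ ({x, y, z} : Finset V))
    simp only [Finset.mem_compl, Finset.mem_insert, Finset.mem_singleton] at this
    push_neg at this
    exact this
  have outy : y ≠ f 0 ∧ y ≠ f 1 ∧ y ≠ f 2 ∧ y ≠ f 3 ∧ y ≠ f 4 ∧ y ≠ f 5 := by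
    have := hsub3 (by simp : y ∈ ({x, y, z} : Finset V))
    simp only [Finset.mem_compl, Finset.mem_insert, Finset.mem_singleton] at this
    push_neg at this
    exact this
  have outz : z ≠ f 0 ∧ z ≠ f 1 ∧ z ≠ f 2 ∧ z ≠ f 3 ∧ z ≠ f 4 ∧ z ≠ f 5 := by
    have := hsub3 (by simp : z ∈ ({x, y, z} : Finset V))
    simp only [Finset.mem_compl, Finset.mem_insert, Finset.mem_singleton] at this
    push_neg at this
    exact this
  have cls : ∀ t : V,
      (t ≠ f 0 ∧ t ≠ f 1 ∧ t ≠ f 2 ∧ t ≠ f 3 ∧ t ≠ f 4 ∧ t ≠ f 5) →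
      (G.Adj t (f 0) ∨ G.Adj t (f 1)) ∨ (G.Adj t (f 4) ∨ G.Adj t (f 5)) := by
    rintro t ⟨o0, o1, o2, o3, o4, o5⟩
    rcases adj4 t o0 o1 o4 o5 with h | h | h | h
    exacts [Or.inl (Or.inl h), Or.inl (Or.inr h), Or.inr (Or.inl h), Or.inr (Or.inr h)]
  rcases cls x outx with hx | hx <;> rcases cls y outy with hy | hy <;>
    rcases cls z outz with hz | hz <;>
    first
    | exact sameA x y outx outy hxy hx hy
    | exact sameA x z outx outz hxz hx hz
    | exact sameA y z outy outz hyz hy hz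
    | exact sameB x y outx outy hxy hx hy
    | exact sameB x z outx outz hxz hx hz
    | exact sameB y z outy outz hyz hy hz
end

section
/- If a graph G on n vertices contains a C~ℓ as a subgraph with ℓ < n−1 and G is connected, then G contains a (t,1,ℓ)-switch for some t ≥ 1: a path v_1...v_{ℓ+1} together with an additional vertex y adjacent to v_t and v_{t+1}. -/
/-- `G` has a `(t,s,ℓ)`-switch: a path `p 0, p 1, …, p ℓ` (so `v_k = p (k-1)` in 1-indexed
notation) together with a vertex `y` off the path adjacent to `v_t, v_{t+1}, …, v_{t+s}`. -/
def HasSwitch {V : Type*} (G : SimpleGraph V) (t s ℓ : ℕ) : Prop :=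
  1 ≤ t ∧ 1 ≤ s ∧ t + s ≤ ℓ + 1 ∧
  ∃ (p : Fin (ℓ + 1) → V) (y : V), Function.Injective p ∧ (∀ i, y ≠ p i) ∧
    (∀ i : Fin ℓ, G.Adj (p i.castSucc) (p i.succ)) ∧
    (∀ (j : ℕ) (h : j < ℓ + 1), t - 1 ≤ j → j ≤ t + s - 1 → G.Adj y (p ⟨j, h⟩))

lemma build_switch {V : Type*} (G : SimpleGraph V) {ℓ : ℕ} (hℓ : 3 ≤ ℓ)
    (q : Fin ℓ → V) (z y : V) (k0 : ℕ) (hk0 : k0 + 1 < ℓ)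
    (hq : Function.Injective q) (hzq : ∀ k, z ≠ q k) (hyq : ∀ k, y ≠ q k) (hyz : y ≠ z)
    (hzadj : G.Adj z (q ⟨0, by omega⟩))
    (hqadj : ∀ (k : ℕ) (h : k + 1 < ℓ), G.Adj (q ⟨k, by omega⟩) (q ⟨k + 1, h⟩))
    (hy1 : G.Adj y (q ⟨k0, by omega⟩)) (hy2 : G.Adj y (q ⟨k0 + 1, hk0⟩)) :
    HasSwitch G (k0 + 2) 1 ℓ := by
  refine ⟨by omega, le_refl 1, by omega, ?_⟩
  set p : Fin (ℓ + 1) → V := fun j => if h : (j : ℕ) = 0 then z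
    else q ⟨(j : ℕ) - 1, by omega⟩ with hp
  have pval0 : ∀ (j : Fin (ℓ + 1)), (j : ℕ) = 0 → p j = z := by
    intro j hj; simp only [hp]; rw [dif_pos hj]
  have pval : ∀ (j : Fin (ℓ + 1)) (hj : (j : ℕ) ≠ 0), p j = q ⟨(j : ℕ) - 1, by omega⟩ := by
    intro j hj; simp only [hp]; rw [dif_neg hj]
  refine ⟨p, y, ?_, ?_, ?_, ?_⟩
  · intro j j' h
    by_cases h1 : (j : ℕ) = 0 <;> by_cases h2 : (j' : ℕ) = 0
    · exact Fin.ext (by omega)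
    · rw [pval0 j h1, pval j' h2] at h; exact absurd h (hzq _)
    · rw [pval j h1, pval0 j' h2] at h; exact absurd h.symm (hzq _)
    · rw [pval j h1, pval j' h2] at h
      have := hq h
      simp only [Fin.mk.injEq] at this
      exact Fin.ext (by omega)
  · intro i
    by_cases h1 : (i : ℕ) = 0
    · rw [pval0 i h1]; exact hyz
    · rw [pval i h1]; exact hyq _
  · intro i
    have hs : ((i.succ : Fin (ℓ + 1)) : ℕ) ≠ 0 := by simp
    rw [pval i.succ hs]
    by_cases h1 : ((i.castSucc : Fin (ℓ + 1)) : ℕ) = 0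
    · rw [pval0 i.castSucc h1]
      have : (⟨((i.succ : Fin (ℓ + 1)) : ℕ) - 1, by omega⟩ : Fin ℓ) = ⟨0, by omega⟩ := by
        apply Fin.ext; simp only [Fin.val_succ]
        simp only [Fin.coe_castSucc] at h1; omega
      rw [this]; exact hzadj
    · rw [pval i.castSucc h1]
      have hi : (i : ℕ) ≠ 0 := by simpa using h1
      have h3 : (i : ℕ) - 1 + 1 < ℓ := by omega
      have e1 : (⟨((i.succ : Fin (ℓ + 1)) : ℕ) - 1, by omega⟩ : Fin ℓ)
          = ⟨(i : ℕ) - 1 + 1, h3⟩ := by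
        apply Fin.ext; simp only [Fin.val_succ]; omega
      have e2 : (⟨((i.castSucc : Fin (ℓ + 1)) : ℕ) - 1, by omega⟩ : Fin ℓ)
          = ⟨(i : ℕ) - 1, by omega⟩ := by
        apply Fin.ext; simp only [Fin.coe_castSucc]
      rw [e1, e2]
      exact hqadj _ h3
  · intro j h hj1 hj2
    have hj0 : j ≠ 0 := by omega
    rw [pval ⟨j, h⟩ hj0]
    have : j = k0 + 1 ∨ j = k0 + 2 := by omega
    rcases this with rfl | rfl
    · have : (⟨((⟨k0 + 1, h⟩ : Fin (ℓ + 1)) : ℕ) - 1, by omega⟩ : Fin ℓ)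
          = ⟨k0, by omega⟩ := Fin.ext (by simp)
      rw [this]; exact hy1
    · have : (⟨((⟨k0 + 2, h⟩ : Fin (ℓ + 1)) : ℕ) - 1, by omega⟩ : Fin ℓ)
          = ⟨k0 + 1, hk0⟩ := Fin.ext (by simp)
      rw [this]; exact hy2

/-- If a connected graph on `n` vertices contains a `C~ℓ` with `ℓ < n - 1`, then it
contains a `(t,1,ℓ)`-switch for some `t ≥ 1`. -/
theorem stmt8 {V : Type*} [Fintype V] (G : SimpleGraph V) (hcon : G.Connected)
    (ℓ : ℕ) (hℓ : 3 ≤ ℓ) (hsmall : ℓ + 1 < Fintype.card V)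
    (hcontain : ContainsCopy (tildeC ℓ) G) :
    ∃ t : ℕ, HasSwitch G t 1 ℓ := by
  obtain ⟨m, rfl⟩ : ∃ m, ℓ = m + 3 := ⟨ℓ - 3, by omega⟩
  obtain ⟨f, hf⟩ := hcontain
  set c : Fin (m + 3) → V := fun i => f (Sum.inl i) with hc
  set y0 : V := f (Sum.inr ()) with hy0
  have hcinj : Function.Injective c := fun i j h => by
    have := hf h; simpa using this
  have hcy : ∀ i, c i ≠ y0 := fun i h => by
    have := hf h; simp at this
  -- adjacency facts in G
  have tadj1 : ∀ i j : Fin (m + 3), (SimpleGraph.cycleGraph (m + 3)).Adj i j →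
      (tildeC (m + 3)).Adj (Sum.inl i) (Sum.inl j) := by
    intro i j hij
    rw [tildeC, SimpleGraph.fromRel_adj]
    exact ⟨by simpa using hij.ne, Or.inl hij⟩
  have tadj2 : ∀ i : Fin (m + 3), ((i : ℕ) = 0 ∨ (i : ℕ) = 1) →
      (tildeC (m + 3)).Adj (Sum.inl i) (Sum.inr ()) := by
    intro i h
    rw [tildeC, SimpleGraph.fromRel_adj]
    refine ⟨by simp, Or.inl h⟩
  have hcyc : ∀ i : Fin (m + 3), G.Adj (c i) (c (i + 1)) := by
    intro i
    apply f.map_adj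
    apply tadj1
    rw [SimpleGraph.cycleGraph_adj']
    right
    rw [add_sub_cancel_left]
    simp
  have hyc0 : G.Adj y0 (c 0) := (f.map_adj (tadj2 0 (Or.inl (by simp)))).symm
  have hyc1 : G.Adj y0 (c 1) := (f.map_adj (tadj2 1 (Or.inr (by simp)))).symm
  -- find a boundary edge
  have hne : Set.range f ≠ Set.univ := by
    intro h
    have hsurj : Function.Surjective f := Set.range_eq_univ.mp h
    have := Fintype.card_of_bijective ⟨hf, hsurj⟩
    simp at this
    omega
  obtain ⟨z0, hz0⟩ := Set.ne_univ_iff_exists_notMem _ |>.mp hne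
  obtain ⟨wlk⟩ := hcon.preconnected z0 (f (Sum.inl 0))
  obtain ⟨d, -, hd1, hd2⟩ := wlk.exists_boundary_dart (Set.range f)ᶜ hz0
    (by simp [Set.mem_range_self])
  set z : V := d.fst with hz
  have hzr : z ∉ Set.range f := hd1
  have hzadj : G.Adj z d.snd := d.adj
  obtain ⟨a, ha⟩ : d.snd ∈ Set.range f := not_not.mp hd2
  rw [← ha] at hzadj
  have hzc : ∀ i, z ≠ c i := fun i h => hzr ⟨Sum.inl i, h.symm⟩
  have hzy : z ≠ y0 := fun h => hzr ⟨Sum.inr (), h.symm⟩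
  rcases a with i | u
  · -- Case: z is attached to a cycle vertex c i
    have hzci : G.Adj z (c i) := hzadj
    set e : Fin (m + 3) := if i = 1 then -1 else 1 with he
    have hecases : (e = -1 ∧ i = 1) ∨ (e = 1 ∧ i ≠ 1) := by
      by_cases h : i = 1 <;> simp [he, h]
    set q : Fin (m + 3) → V := fun k => c (i + e * k) with hq
    have hqinj : Function.Injective q := by
      intro k k' h
      have h2 : e * k = e * k' := add_left_cancel (hcinj h)
      rcases hecases with ⟨he1, -⟩ | ⟨he1, -⟩ <;> rw [he1] at h2 <;> simpa using h2
    have hq0 : ∀ h0 : (0 : ℕ) < m + 3, q ⟨0, h0⟩ = c i := by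
      intro h0
      have : (⟨0, h0⟩ : Fin (m + 3)) = 0 := Fin.ext (by simp)
      simp only [hq, this, mul_zero, add_zero]
    have hqadj : ∀ (k : ℕ) (h : k + 1 < m + 3), G.Adj (q ⟨k, by omega⟩) (q ⟨k + 1, h⟩) := by
      intro k hk
      have estep : (⟨k + 1, hk⟩ : Fin (m + 3)) = ⟨k, by omega⟩ + 1 := by
        rw [Fin.ext_iff, Fin.add_def, Fin.val_one]
        exact (Nat.mod_eq_of_lt hk).symm
      simp only [hq]
      rw [estep, mul_add, mul_one, ← add_assoc]
      set v : Fin (m + 3) := i + e * ⟨k, by omega⟩ with hv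
      rcases hecases with ⟨he1, -⟩ | ⟨he1, -⟩
      · rw [he1]
        have e2 : v + -1 = v - 1 := by open Fin.CommRing in ring
        have e3 : (v - 1) + 1 = v := by open Fin.CommRing in ring
        rw [e2]
        exact (e3 ▸ hcyc (v - 1)).symm
      · rw [he1]
        exact hcyc v
    have hzq : ∀ k, z ≠ q k := fun k => hzc _
    have hyq : ∀ k, y0 ≠ q k := fun k => (hcy _).symm
    rcases hecases with ⟨he1, hi1⟩ | ⟨he1, hi1⟩
    · -- i = 1, go backwards; switch vertex y0 at t = 2
      refine ⟨0 + 2, build_switch G (by omega) q z y0 0 (by omega)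
        hqinj hzq hyq hzy.symm ?_ hqadj ?_ ?_⟩
      · rw [hq0]; exact hzci
      · rw [hq0]; rw [hi1]; exact hyc1
      · have e1 : (⟨0 + 1, by omega⟩ : Fin (m + 3)) = 1 := Fin.ext (by simp)
        have e2 : i + e * 1 = 0 := by rw [he1, hi1]; open Fin.CommRing in ring
        simp only [hq, e1, e2]
        exact hyc0
    · -- i ≠ 1, go forwards; switch vertex y0 where the path passes c 0, c 1
      have hival : (i : ℕ) = 0 ∨ 2 ≤ (i : ℕ) := by
        rcases Nat.lt_or_ge (i : ℕ) 1 with h | h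
        · left; omega
        · rcases Nat.eq_or_lt_of_le h with h' | h'
          · exact absurd (Fin.ext (by simp [← h'])) hi1
          · right; omega
      set k0 : ℕ := ((-i : Fin (m + 3)) : ℕ) with hk0
      have hk0v : k0 = (m + 3 - (i : ℕ)) % (m + 3) := by
        rw [hk0, Fin.coe_neg]
      have hk0lt : k0 + 1 < m + 3 := by
        rcases hival with h | h
        · rw [hk0v, h, Nat.sub_zero, Nat.mod_self]; omega
        · rw [hk0v, Nat.mod_eq_of_lt (by omega)]; omega
      have ek0 : (⟨k0, by omega⟩ : Fin (m + 3)) = -i := Fin.ext rfl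
      have ek1 : (⟨k0 + 1, hk0lt⟩ : Fin (m + 3)) = -i + 1 := by
        rw [Fin.ext_iff, Fin.add_def]
        simp only [Fin.val_one]
        rw [Nat.mod_eq_of_lt (by omega)]
      refine ⟨k0 + 2, build_switch G (by omega) q z y0 k0 hk0lt
        hqinj hzq hyq hzy.symm ?_ hqadj ?_ ?_⟩
      · rw [hq0]; exact hzci
      · have e2 : i + e * (-i) = 0 := by rw [he1]; open Fin.CommRing in ring
        simp only [hq, ek0, e2]
        exact hyc0
      · have e2 : i + e * (-i + 1) = 1 := by rw [he1]; open Fin.CommRing in ring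
        simp only [hq, ek1, e2]
        exact hyc1
  · -- Case: z is attached to y0
    have hzy0 : G.Adj z y0 := hzadj
    set q : Fin (m + 3) → V := fun k => if (k : ℕ) = 0 then y0 else c k with hq
    have hq0 : ∀ k : Fin (m + 3), (k : ℕ) = 0 → q k = y0 := by
      intro k hk; simp only [hq]; rw [if_pos hk]
    have hqpos : ∀ k : Fin (m + 3), (k : ℕ) ≠ 0 → q k = c k := by
      intro k hk; simp only [hq]; rw [if_neg hk]
    have hqinj : Function.Injective q := by
      intro k k' h
      by_cases h1 : (k : ℕ) = 0 <;> by_cases h2 : (k' : ℕ) = 0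
      · exact Fin.ext (by omega)
      · rw [hq0 k h1, hqpos k' h2] at h; exact absurd h.symm (hcy _)
      · rw [hqpos k h1, hq0 k' h2] at h; exact absurd h (hcy _)
      · rw [hqpos k h1, hqpos k' h2] at h; exact hcinj h
    have hzq : ∀ k, z ≠ q k := by
      intro k
      by_cases h1 : (k : ℕ) = 0
      · rw [hq0 k h1]; exact hzy
      · rw [hqpos k h1]; exact hzc _
    have hyq : ∀ k, c 0 ≠ q k := by
      intro k
      by_cases h1 : (k : ℕ) = 0
      · rw [hq0 k h1]; exact hcy 0
      · rw [hqpos k h1]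
        intro h
        have := hcinj h
        rw [Fin.ext_iff] at this
        simp at this
        omega
    have hqadj : ∀ (k : ℕ) (h : k + 1 < m + 3), G.Adj (q ⟨k, by omega⟩) (q ⟨k + 1, h⟩) := by
      intro k hk
      rw [hqpos ⟨k + 1, hk⟩ (by simp)]
      by_cases h1 : k = 0
      · subst h1
        rw [hq0 ⟨0, by omega⟩ rfl]
        have : (⟨0 + 1, hk⟩ : Fin (m + 3)) = 1 := Fin.ext (by simp)
        rw [this]
        exact hyc1
      · rw [hqpos ⟨k, by omega⟩ h1]
        have e1 : (⟨k, by omega⟩ : Fin (m + 3)) + 1 = ⟨k + 1, hk⟩ := by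
          rw [Fin.ext_iff, Fin.add_def, Fin.val_one]
          exact Nat.mod_eq_of_lt hk
        exact e1 ▸ hcyc ⟨k, by omega⟩
    refine ⟨0 + 2, build_switch G (by omega) q z (c 0) 0 (by omega)
      hqinj hzq hyq (hzc 0).symm ?_ hqadj ?_ ?_⟩
    · rw [hq0 _ rfl]; exact hzy0
    · rw [hq0 _ rfl]; exact hyc0.symm
    · rw [hqpos ⟨0 + 1, by omega⟩ (by simp)]
      have : (⟨0 + 1, by omega⟩ : Fin (m + 3)) = 1 := Fin.ext (by simp)
      rw [this]
      simpa using hcyc 0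
end
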